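/- arXiv:2204.12548 — 7 statements merged into one kernel-verified Lean document; each statement's English description precedes it below -/
import Mathlib

section
/- Let q : ℝ × ℝ → ℂ be a smooth solution of the derivative nonlinear Schrödinger equation i ∂_t q + ∂_x² q + i ∂_x(|q|² q) = 0 such that: (a) for each t ∈ ℝ the function x ↦ q(t,x) is Schwartz class; and (b) for every compact interval I ⊆ ℝ there is an integrable function F : ℝ → [0,∞) with |∂_t(|q(t,x)|²)| ≤ F(x) for all t ∈ I and x ∈ ℝ. Fix ν ∈ ℝ and set Φ(t,x) := ∫_{−∞}^{x} |q(t,y)|² dy and w := q · e^{i ν Φ}. Then w satisfies, pointwise on ℝ × ℝ, the equation i ∂_t w + ∂_x² w = 2i(ν−1) |w|² ∂_x w + i(2ν−1) w² ∂_x(conj(w)) − (1/2) ν (2ν−1) |w|⁴ w. -/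
open MeasureTheory

/-- `q` is a (smooth, pointwise) solution of the derivative nonlinear Schrödinger
equation `i ∂_t q + ∂_x² q + i ∂_x(|q|² q) = 0` on `ℝ × ℝ`. -/
def IsDNLSSolution (q : ℝ × ℝ → ℂ) : Prop :=
  ContDiff ℝ (⊤ : ℕ∞) q ∧ ∀ t x : ℝ,
    Complex.I * deriv (fun s => q (s, x)) t
      + deriv (deriv (fun y => q (t, y))) x
      + Complex.I *
          deriv (fun y => ((‖q (t, y)‖ : ℂ)) ^ 2 * q (t, y)) x = 0

open Complex Filter Set

private lemma hasDerivAt_conj' {f : ℝ → ℂ} {d : ℂ} {x : ℝ} (h : HasDerivAt f d x) :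
    HasDerivAt (fun y => (starRingEnd ℂ) (f y)) ((starRingEnd ℂ) d) x := by
  exact h.star

private lemma hasDerivAt_re' {f : ℝ → ℂ} {d : ℂ} {x : ℝ} (h : HasDerivAt f d x) :
    HasDerivAt (fun y => (f y).re) d.re x := by
  exact (Complex.reCLM.hasFDerivAt.comp_hasDerivAt x h)

private lemma ofReal_re_eq (z : ℂ) : ((z.re : ℝ) : ℂ) = (z + (starRingEnd ℂ) z)/2 := by
  rw [Complex.add_conj]; push_cast; ring

/-- **Gauge transformation.** Let `q` be a smooth Schwartz-class (in `x`) solution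
of DNLS with locally-in-time dominated time derivative of `|q|²`.  Fix `ν ∈ ℝ`, set
`Φ(t,x) = ∫_{-∞}^x |q(t,y)|² dy` and `w = q e^{iνΦ}`.  Then
`i ∂_t w + ∂_x² w = 2i(ν-1)|w|² ∂_x w + i(2ν-1) w² ∂_x(conj w) - ½ν(2ν-1)|w|⁴ w`. -/
theorem stmt_3 (q : ℝ × ℝ → ℂ) (hq : IsDNLSSolution q)
    (hSchwartz : ∀ t : ℝ, ∃ f : SchwartzMap ℝ ℂ, ∀ x : ℝ, q (t, x) = f x)
    (hdom : ∀ a b : ℝ, ∃ F : ℝ → ℝ, Integrable F ∧ (∀ x, 0 ≤ F x) ∧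
      ∀ t ∈ Set.Icc a b, ∀ x : ℝ,
        |deriv (fun s => ‖q (s, x)‖ ^ 2) t| ≤ F x)
    (ν : ℝ) :
    let Φ : ℝ × ℝ → ℝ := fun p => ∫ y in Set.Iic p.2, ‖q (p.1, y)‖ ^ 2
    let w : ℝ × ℝ → ℂ := fun p => q p * Complex.exp (Complex.I * (ν : ℂ) * (Φ p : ℂ))
    ∀ t x : ℝ,
      Complex.I * deriv (fun s => w (s, x)) t
          + deriv (deriv (fun y => w (t, y))) x
        = 2 * Complex.I * ((ν : ℂ) - 1) * ((‖w (t, x)‖ : ℂ)) ^ 2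
              * deriv (fun y => w (t, y)) x
          + Complex.I * (2 * (ν : ℂ) - 1) * (w (t, x)) ^ 2
              * deriv (fun y => (starRingEnd ℂ) (w (t, y))) x
          - (1 / 2 : ℂ) * (ν : ℂ) * (2 * (ν : ℂ) - 1)
              * ((‖w (t, x)‖ : ℂ)) ^ 4 * w (t, x) := by
  obtain ⟨hsm', hEq⟩ := hq
  have hsm : ContDiff ℝ (⊤:ℕ∞) q := hsm'.of_le (by simp)
  intro Φ w t x
  -- slice smoothness
  have hslx : ∀ t' : ℝ, ContDiff ℝ (⊤:ℕ∞) (fun y => q (t', y)) := fun t' =>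
    hsm.comp (contDiff_const.prodMk contDiff_id)
  have hslt : ∀ y : ℝ, ContDiff ℝ (⊤:ℕ∞) (fun s => q (s, y)) := fun y =>
    hsm.comp (contDiff_id.prodMk contDiff_const)
  have hconjsl : ∀ t' : ℝ, ContDiff ℝ (⊤:ℕ∞) (fun y => (starRingEnd ℂ) (q (t', y))) := fun t' =>
    Complex.conjCLE.toContinuousLinearMap.contDiff.comp (hslx t')
  -- x-derivative of q at time t
  set qx : ℝ → ℂ := deriv (fun y => q (t, y)) with hqx_def
  have hqx_d : ∀ y, HasDerivAt (fun y' => q (t, y')) (qx y) y := fun y =>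
    (((hslx t).differentiable (by simp)) y).hasDerivAt
  have hqx_sm : ContDiff ℝ (⊤:ℕ∞) qx := (contDiff_infty_iff_deriv.mp (hslx t)).2
  have hqxx_d : ∀ y, HasDerivAt qx (deriv qx y) y := fun y =>
    ((hqx_sm.differentiable (by simp)) y).hasDerivAt
  -- time derivative of q
  set qt : ℝ → ℂ := fun y => deriv (fun s => q (s, y)) t with hqt_def
  -- rho = |q|^2
  set rho : ℝ → ℝ → ℝ := fun s y => Complex.normSq (q (s, y)) with hrho_def
  have hrho_c : ∀ s y, ((rho s y : ℝ) : ℂ) = q (s, y) * (starRingEnd ℂ) (q (s, y)) :=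
    fun s y => (Complex.mul_conj _).symm
  have hrho_re : ∀ s y, rho s y = (q (s, y) * (starRingEnd ℂ) (q (s, y))).re := fun s y => by
    rw [Complex.mul_conj]; simp [hrho_def]
  have hrho_abs : ∀ s y, ‖q (s, y)‖ ^ 2 = rho s y := fun s y => Complex.sq_norm _
  have hrho_smx : ∀ s, ContDiff ℝ (⊤:ℕ∞) (fun y => rho s y) := by
    intro s
    have h1 : (fun y => rho s y) = fun y => (q (s, y) * (starRingEnd ℂ) (q (s, y))).re :=
      funext fun y => hrho_re s y
    rw [h1]
    exact Complex.reCLM.contDiff.comp ((hslx s).mul (hconjsl s))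
  have hrho_smt : ∀ y, ContDiff ℝ (⊤:ℕ∞) (fun s => rho s y) := by
    intro y
    have h1 : (fun s => rho s y) = fun s => (q (s, y) * (starRingEnd ℂ) (q (s, y))).re :=
      funext fun s => hrho_re s y
    rw [h1]
    refine Complex.reCLM.contDiff.comp ((hslt y).mul ?_)
    exact Complex.conjCLE.toContinuousLinearMap.contDiff.comp (hslt y)
  set rhox : ℝ → ℝ := fun y => (qx y * (starRingEnd ℂ) (q (t, y))
      + q (t, y) * (starRingEnd ℂ) (qx y)).re with hrhox_def
  have hrhox_c : ∀ y, ((rhox y : ℝ) : ℂ)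
      = qx y * (starRingEnd ℂ) (q (t, y)) + q (t, y) * (starRingEnd ℂ) (qx y) := by
    intro y
    rw [hrhox_def]
    rw [ofReal_re_eq]
    simp only [map_add, map_mul, Complex.conj_conj]
    ring
  have hrho_x : ∀ y, HasDerivAt (fun y' => rho t y') (rhox y) y := by
    intro y
    have h1 : (fun y' => rho t y') = fun y' => (q (t, y') * (starRingEnd ℂ) (q (t, y'))).re :=
      funext fun y' => hrho_re t y'
    rw [h1, hrhox_def]
    exact hasDerivAt_re' ((hqx_d y).mul (hasDerivAt_conj' (hqx_d y)))
  set rt : ℝ → ℝ → ℝ := fun s y => deriv (fun s' => rho s' y) s with hrt_def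
  have hrho_t : ∀ s y, HasDerivAt (fun s' => rho s' y) (rt s y) s := fun s y =>
    (((hrho_smt y).differentiable (by simp)) s).hasDerivAt
  have hqt_d : ∀ y, HasDerivAt (fun s => q (s, y)) (qt y) t := fun y =>
    (((hslt y).differentiable (by simp)) t).hasDerivAt
  have hrt_val : ∀ y, rt t y
      = (qt y * (starRingEnd ℂ) (q (t, y)) + q (t, y) * (starRingEnd ℂ) (qt y)).re := by
    intro y
    have h2 : HasDerivAt (fun s' => rho s' y)
        ((qt y * (starRingEnd ℂ) (q (t, y)) + q (t, y) * (starRingEnd ℂ) (qt y)).re) t := by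
      have h1 : (fun s' => rho s' y) = fun s' => (q (s', y) * (starRingEnd ℂ) (q (s', y))).re :=
        funext fun s' => hrho_re s' y
      rw [h1]
      exact hasDerivAt_re' ((hqt_d y).mul (hasDerivAt_conj' (hqt_d y)))
    exact (hrho_t t y).unique h2
  have hrt_c : ∀ y, ((rt t y : ℝ) : ℂ)
      = qt y * (starRingEnd ℂ) (q (t, y)) + q (t, y) * (starRingEnd ℂ) (qt y) := by
    intro y
    rw [hrt_val y, ofReal_re_eq]
    simp only [map_add, map_mul, Complex.conj_conj]
    ring
  -- DNLS pointwise at time t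
  have hdnls : ∀ y, Complex.I * qt y + deriv qx y
      + Complex.I * (((rhox y : ℝ) : ℂ) * q (t, y) + ((rho t y : ℝ) : ℂ) * qx y) = 0 := by
    intro y
    have h := hEq t y
    have h1 : (fun z => ((‖q (t, z)‖ : ℂ)) ^ 2 * q (t, z))
        = fun z => ((rho t z : ℝ) : ℂ) * q (t, z) := by
      funext z
      rw [← Complex.ofReal_pow, hrho_abs]
    have h2 : HasDerivAt (fun z => ((rho t z : ℝ) : ℂ) * q (t, z))
        (((rhox y : ℝ) : ℂ) * q (t, y) + ((rho t y : ℝ) : ℂ) * qx y) y :=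
      ((hrho_x y).ofReal_comp).mul (hqx_d y)
    rw [h1, h2.deriv] at h
    exact h
  have hD : ∀ y, qt y = Complex.I * deriv qx y
      - (((rhox y : ℝ) : ℂ) * q (t, y) + ((rho t y : ℝ) : ℂ) * qx y) := by
    intro y
    have h := hdnls y
    linear_combination (-Complex.I) * h
      + (qt y + (((rhox y : ℝ) : ℂ) * q (t, y) + ((rho t y : ℝ) : ℂ) * qx y)) * Complex.I_sq
  -- the G function and its derivative
  set Gf : ℝ → ℝ := fun y =>
    2 * (Complex.I * (starRingEnd ℂ) (q (t, y)) * qx y).re - 3/2 * rho t y ^ 2 with hGf_def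
  have hG_d : ∀ y, HasDerivAt Gf (rt t y) y := by
    intro y
    have hc : HasDerivAt (fun y' => (starRingEnd ℂ) (q (t, y'))) ((starRingEnd ℂ) (qx y)) y :=
      hasDerivAt_conj' (hqx_d y)
    have h1 : HasDerivAt (fun y' => Complex.I * (starRingEnd ℂ) (q (t, y')) * qx y')
        (Complex.I * (starRingEnd ℂ) (qx y) * qx y
          + Complex.I * (starRingEnd ℂ) (q (t, y)) * deriv qx y) y := by
      exact (hc.const_mul Complex.I).mul (hqxx_d y)
    have h2 : HasDerivAt (fun y' => rho t y' ^ 2) (2 * rho t y * rhox y) y := by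
      simpa using (hrho_x y).fun_pow 2
    have h3 : HasDerivAt Gf
        (2 * (Complex.I * (starRingEnd ℂ) (qx y) * qx y
            + Complex.I * (starRingEnd ℂ) (q (t, y)) * deriv qx y).re
          - 3/2 * (2 * rho t y * rhox y)) y := by
      rw [hGf_def]
      exact ((hasDerivAt_re' h1).const_mul 2).sub (h2.const_mul (3/2))
    have hval : 2 * (Complex.I * (starRingEnd ℂ) (qx y) * qx y
            + Complex.I * (starRingEnd ℂ) (q (t, y)) * deriv qx y).re
          - 3/2 * (2 * rho t y * rhox y) = rt t y := by
      rw [← Complex.ofReal_inj]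
      push_cast
      rw [ofReal_re_eq, hrt_c y, hD y]
      simp only [map_add, map_sub, map_mul, Complex.conj_conj, Complex.conj_I,
        Complex.conj_ofReal]
      rw [hrhox_c, hrho_c]
      ring
    rw [← hval]
    exact h3
  -- Schwartz data at time t
  obtain ⟨f, hf⟩ := hSchwartz t
  have hfq : (fun y => q (t, y)) = ⇑f := funext hf
  have hqx_f : qx = ⇑(SchwartzMap.derivCLM ℝ ℂ f) := by
    rw [hqx_def, hfq]
    exact funext fun y => (SchwartzMap.derivCLM_apply ℝ f y).symm
  -- integrability of rho t
  have hrho_int : Integrable (fun y => rho t y) := by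
    have hM : ∀ y, ‖f y‖ ≤ SchwartzMap.seminorm ℝ 0 0 f := fun y => f.norm_le_seminorm ℝ y
    refine ((f.integrable.norm.const_mul (SchwartzMap.seminorm ℝ 0 0 f)).mono'
      ((hrho_smx t).continuous.aestronglyMeasurable) ?_)
    filter_upwards with y
    have h0 : rho t y = ‖q (t, y)‖ ^ 2 := by
      rw [← hrho_abs t y]
    rw [Real.norm_eq_abs, _root_.abs_of_nonneg (by rw [h0]; positivity), h0, hf y]
    calc ‖f y‖ ^ 2 = ‖f y‖ * ‖f y‖ := sq ‖f y‖ ▸ rfl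
    _ ≤ SchwartzMap.seminorm ℝ 0 0 f * ‖f y‖ :=
        mul_le_mul_of_nonneg_right (hM y) (norm_nonneg _)
  -- Φ in terms of rho
  have hPhi_eq : ∀ s y, Φ (s, y) = ∫ z in Iic y, rho s z := by
    intro s y
    show (∫ z in Iic y, ‖q (s, z)‖ ^ 2) = _
    exact integral_congr_ae (Filter.Eventually.of_forall fun z => hrho_abs s z)
  -- spatial derivative of Φ at time t
  have hPhi_x : ∀ y, HasDerivAt (fun y' => Φ (t, y')) (rho t y) y := by
    intro y
    have hfun : (fun y' => Φ (t, y'))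
        = fun y' => (∫ z in Iic (0:ℝ), rho t z) + ∫ z in (0:ℝ)..y', rho t z := by
      funext y'
      rw [hPhi_eq]
      have := intervalIntegral.integral_Iic_sub_Iic (hrho_int.integrableOn (s := Iic (0:ℝ)))
        (hrho_int.integrableOn (s := Iic y'))
      linarith [this]
    rw [hfun]
    have key : HasDerivAt (fun y' => ∫ z in (0:ℝ)..y', rho t z) (rho t y) y :=
      intervalIntegral.integral_hasDerivAt_right (hrho_int.intervalIntegrable)
        ((hrho_smx t).continuous.stronglyMeasurableAtFilter _ _)
        (hrho_smx t).continuous.continuousAt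
    exact key.const_add _
  -- continuity and integrability of rt t
  have hGf_sm : ContDiff ℝ (⊤:ℕ∞) Gf := by
    rw [hGf_def]
    refine ContDiff.sub (contDiff_const.mul (Complex.reCLM.contDiff.comp
      ((contDiff_const.mul (hconjsl t)).mul hqx_sm))) (contDiff_const.mul ((hrho_smx t).pow 2))
  have hrt_cont : Continuous (fun y => rt t y) := by
    have h1 : (fun y => rt t y) = deriv Gf := funext fun y => ((hG_d y).deriv).symm
    rw [h1]
    exact ((contDiff_infty_iff_deriv.mp hGf_sm).2).continuous
  have hrt_dom : ∀ a b : ℝ, ∃ F : ℝ → ℝ, Integrable F ∧ (∀ x, 0 ≤ F x) ∧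
      ∀ s ∈ Set.Icc a b, ∀ y : ℝ, |rt s y| ≤ F y := by
    intro a b
    obtain ⟨F, h1, h2, h3⟩ := hdom a b
    refine ⟨F, h1, h2, fun s hs y => ?_⟩
    have h4 : (fun s' => ‖q (s', y)‖ ^ 2) = fun s' => rho s' y :=
      funext fun s' => hrho_abs s' y
    have := h3 s hs y
    rwa [h4] at this
  have hrt_int : IntegrableOn (fun y => rt t y) (Iic x) := by
    obtain ⟨F, h1, h2, h3⟩ := hrt_dom t t
    refine (h1.integrableOn).mono' (hrt_cont.aestronglyMeasurable.restrict) ?_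
    filter_upwards with y
    rw [Real.norm_eq_abs]
    exact h3 t (by simp) y
  -- time derivative of Φ at (t, x)
  have hPhi_t : HasDerivAt (fun s => Φ (s, x)) (∫ y in Iic x, rt t y) t := by
    obtain ⟨F, h1, h2, h3⟩ := hrt_dom (t - 1) (t + 1)
    have key := hasDerivAt_integral_of_dominated_loc_of_deriv_le (μ := volume.restrict (Iic x))
      (F := fun s y => rho s y) (F' := fun s y => rt s y) (x₀ := t) (bound := F)
      (s := Metric.ball t 1) (Metric.ball_mem_nhds t one_pos)
      (Filter.Eventually.of_forall fun s => (hrho_smx s).continuous.aestronglyMeasurable.restrict)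
      hrho_int.integrableOn
      (hrt_cont.aestronglyMeasurable.restrict)
      (Filter.Eventually.of_forall fun y s hs => by
        have hs' : s ∈ Set.Icc (t - 1) (t + 1) := by
          rw [Real.ball_eq_Ioo] at hs
          exact ⟨hs.1.le, hs.2.le⟩
        simpa [Real.norm_eq_abs] using h3 s hs' y)
      h1.integrableOn
      (Filter.Eventually.of_forall fun y s _ => hrho_t s y)
    have h4 : (fun s => Φ (s, x)) = fun s => ∫ y in Iic x, rho s y :=
      funext fun s => hPhi_eq s x
    rw [h4]
    exact key.2
  -- decay of Gf and the value of the time derivative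
  have hq0 : Tendsto (fun y => q (t, y)) atBot (nhds 0) := by
    rw [hfq]
    exact (zero_at_infty f).mono_left atBot_le_cocompact
  have hqx0 : Tendsto qx atBot (nhds 0) := by
    rw [hqx_f]
    exact (zero_at_infty (SchwartzMap.derivCLM ℝ ℂ f)).mono_left atBot_le_cocompact
  have hG0 : Tendsto Gf atBot (nhds 0) := by
    have h1 : Tendsto (fun y => Complex.I * (starRingEnd ℂ) (q (t, y)) * qx y) atBot
        (nhds (Complex.I * (starRingEnd ℂ) 0 * 0)) :=
      (tendsto_const_nhds.mul ((Complex.continuous_conj.tendsto 0).comp hq0)).mul hqx0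
    have h2 : Tendsto (fun y => rho t y) atBot (nhds (Complex.normSq 0)) :=
      (Complex.continuous_normSq.tendsto 0).comp hq0
    have h3 := ((Complex.continuous_re.tendsto _).comp h1).const_mul (2:ℝ)
    have h4 := (h2.pow 2).const_mul (3/2 : ℝ)
    have := h3.sub h4
    simpa [hGf_def] using this
  have hPhi_t_val : (∫ y in Iic x, rt t y) = Gf x := by
    have := MeasureTheory.integral_Iic_of_hasDerivAt_of_tendsto'
      (fun y _ => hG_d y) hrt_int hG0
    rw [this, sub_zero]
  rw [hPhi_t_val] at hPhi_t
  -- derivatives of w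
  have hW_t : HasDerivAt (fun s => w (s, x))
      (qt x * Complex.exp (Complex.I * (ν:ℂ) * ((Φ (t, x) : ℝ) : ℂ))
        + q (t, x) * (Complex.exp (Complex.I * (ν:ℂ) * ((Φ (t, x) : ℝ) : ℂ))
            * (Complex.I * (ν:ℂ) * ((Gf x : ℝ) : ℂ)))) t := by
    have h1 : HasDerivAt (fun s => Complex.I * (ν:ℂ) * ((Φ (s, x) : ℝ) : ℂ))
        (Complex.I * (ν:ℂ) * ((Gf x : ℝ) : ℂ)) t := (hPhi_t.ofReal_comp).const_mul _
    exact (hqt_d x).mul h1.cexp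
  have hW_x : ∀ y, HasDerivAt (fun y' => w (t, y'))
      (qx y * Complex.exp (Complex.I * (ν:ℂ) * ((Φ (t, y) : ℝ) : ℂ))
        + q (t, y) * (Complex.exp (Complex.I * (ν:ℂ) * ((Φ (t, y) : ℝ) : ℂ))
            * (Complex.I * (ν:ℂ) * ((rho t y : ℝ) : ℂ)))) y := by
    intro y
    have h1 : HasDerivAt (fun y' => Complex.I * (ν:ℂ) * ((Φ (t, y') : ℝ) : ℂ))
        (Complex.I * (ν:ℂ) * ((rho t y : ℝ) : ℂ)) y := ((hPhi_x y).ofReal_comp).const_mul _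
    exact (hqx_d y).mul h1.cexp
  have hWx_fun : deriv (fun y' => w (t, y')) = fun y =>
      qx y * Complex.exp (Complex.I * (ν:ℂ) * ((Φ (t, y) : ℝ) : ℂ))
        + q (t, y) * (Complex.exp (Complex.I * (ν:ℂ) * ((Φ (t, y) : ℝ) : ℂ))
            * (Complex.I * (ν:ℂ) * ((rho t y : ℝ) : ℂ))) := funext fun y => (hW_x y).deriv
  have hexp_x : HasDerivAt (fun y => Complex.exp (Complex.I * (ν:ℂ) * ((Φ (t, y) : ℝ) : ℂ)))
      (Complex.exp (Complex.I * (ν:ℂ) * ((Φ (t, x) : ℝ) : ℂ))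
        * (Complex.I * (ν:ℂ) * ((rho t x : ℝ) : ℂ))) x :=
    (((hPhi_x x).ofReal_comp).const_mul _).cexp
  have hW_xx := ((hqxx_d x).fun_mul hexp_x).fun_add
    ((hqx_d x).fun_mul (hexp_x.fun_mul (((hrho_x x).ofReal_comp).const_mul (Complex.I * (ν:ℂ)))))
  have hconjW := (hasDerivAt_conj' (hW_x x)).deriv
  -- |w| = |q|
  have habs : ‖w (t, x)‖ = ‖q (t, x)‖ := by
    show ‖q (t, x) * Complex.exp (Complex.I * (ν:ℂ) * ((Φ (t, x) : ℝ) : ℂ))‖ = _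
    rw [norm_mul]
    rw [show Complex.I * (ν:ℂ) * ((Φ (t, x) : ℝ) : ℂ) = ((ν * Φ (t, x) : ℝ) : ℂ) * Complex.I by
      push_cast; ring]
    rw [Complex.norm_exp_ofReal_mul_I, mul_one]
  have habs2 : ((‖w (t, x)‖ : ℝ) : ℂ) ^ 2
      = q (t, x) * (starRingEnd ℂ) (q (t, x)) := by
    rw [habs, ← Complex.ofReal_pow, hrho_abs, hrho_c]
  have habs4 : ((‖w (t, x)‖ : ℝ) : ℂ) ^ 4
      = (q (t, x) * (starRingEnd ℂ) (q (t, x))) ^ 2 := by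
    rw [show (4:ℕ) = 2 * 2 from rfl, pow_mul, habs2]
  have hw_pt : w (t, x) = q (t, x) * Complex.exp (Complex.I * (ν:ℂ) * ((Φ (t, x) : ℝ) : ℂ)) :=
    rfl
  -- coercion identities
  have hGf_c : ((Gf x : ℝ) : ℂ)
      = Complex.I * (starRingEnd ℂ) (q (t, x)) * qx x
        - Complex.I * q (t, x) * (starRingEnd ℂ) (qx x)
        - 3/2 * (q (t, x) * (starRingEnd ℂ) (q (t, x))) ^ 2 := by
    have h1 : ((Gf x : ℝ) : ℂ)
        = 2 * (((Complex.I * (starRingEnd ℂ) (q (t, x)) * qx x).re : ℝ) : ℂ)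
          - 3/2 * ((rho t x : ℝ) : ℂ) ^ 2 := by
      rw [hGf_def]; push_cast; ring
    rw [h1, ofReal_re_eq]
    simp only [map_mul, Complex.conj_conj, Complex.conj_I]
    rw [hrho_c]
    ring
  have hdnls' := hdnls x
  rw [hrhox_c, hrho_c] at hdnls'
  -- assemble
  rw [hW_t.deriv, hWx_fun]
  rw [hW_xx.deriv, hconjW, hw_pt, habs2, habs4]
  rw [hGf_c, hrhox_c, hrho_c]
  simp only [map_add, map_mul, Complex.conj_conj, Complex.conj_I, Complex.conj_ofReal]
  rw [hrho_c]
  set E : ℂ := Complex.exp (Complex.I * (ν:ℂ) * ((Φ (t, x) : ℝ) : ℂ)) with hE_def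
  have hE1 : E * (starRingEnd ℂ) E = 1 := by
    rw [hE_def, ← Complex.exp_conj, ← Complex.exp_add]
    rw [show (starRingEnd ℂ) (Complex.I * (ν:ℂ) * ((Φ (t, x) : ℝ) : ℂ))
        = -(Complex.I * (ν:ℂ) * ((Φ (t, x) : ℝ) : ℂ)) by
      simp only [map_mul, Complex.conj_I, Complex.conj_ofReal]; ring]
    rw [add_neg_cancel, Complex.exp_zero]
  linear_combination
    E * hdnls'
    + (Complex.I * q (t,x)^2 * (starRingEnd ℂ) (qx x) * E
       - 2*(ν:ℂ)*Complex.I*q (t,x)^2*(starRingEnd ℂ) (qx x)*E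
       - (ν:ℂ)*Complex.I^2*q (t,x)^3*((starRingEnd ℂ) (q (t,x)))^2*E
       + 2*(ν:ℂ)^2*Complex.I^2*q (t,x)^3*((starRingEnd ℂ) (q (t,x)))^2*E) * hE1
    + ((ν:ℂ)*q (t,x)*(starRingEnd ℂ) (q (t,x))*qx x*E*Complex.I
       - (ν:ℂ)*q (t,x)^2*(starRingEnd ℂ) (qx x)*E*Complex.I
       - (1/2)*(ν:ℂ)*q (t,x)^3*((starRingEnd ℂ) (q (t,x)))^2*E
       + (ν:ℂ)^2*q (t,x)^3*((starRingEnd ℂ) (q (t,x)))^2*E) * Complex.I_sq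
end

section
/- Fix θ ∈ (0, π/2) and define q₀ : ℝ → ℂ by q₀(x) := √(2 sin(2θ)) · (cos θ · cosh x − i sin θ · sinh x)³ / (cos²θ · cosh²x + sin²θ · sinh²x)² · e^{−i x · cot(2θ)}. Then the function q(t,x) := q₀(x + 2 cot(2θ) t) · e^{i t / sin²(2θ)} is a smooth solution of the derivative nonlinear Schrödinger equation i ∂_t q + ∂_x² q + i ∂_x(|q|² q) = 0 on ℝ × ℝ. -/
set_option maxHeartbeats 1000000

noncomputable section

open Complex

def kN (A B C S : ℂ) : ℂ := A*C - Complex.I*B*S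
def kN' (A B C S : ℂ) : ℂ := A*S - Complex.I*B*C
def kD (A B C S : ℂ) : ℂ := A^2*C^2 + B^2*S^2
def kD' (A B C S : ℂ) : ℂ := A^2*(2*C*S) + B^2*(2*S*C)
def kD'' (A B C S : ℂ) : ℂ := A^2*(2*(S^2+C^2)) + B^2*(2*(C^2+S^2))
def kM (A B C S k : ℂ) : ℂ := 3*(kN A B C S)^2*(kN' A B C S)*(kD A B C S)
  - 2*(kN A B C S)^3*(kD' A B C S) - Complex.I*k*(kN A B C S)^3*(kD A B C S)
def kM' (A B C S k : ℂ) : ℂ := 6*(kN A B C S)*(kN' A B C S)^2*(kD A B C S)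
  + 3*(kN A B C S)^2*(kN A B C S)*(kD A B C S)
  + 3*(kN A B C S)^2*(kN' A B C S)*(kD' A B C S)
  - 6*(kN A B C S)^2*(kN' A B C S)*(kD' A B C S)
  - 2*(kN A B C S)^3*(kD'' A B C S)
  - Complex.I*k*(3*(kN A B C S)^2*(kN' A B C S)*(kD A B C S) + (kN A B C S)^3*(kD' A B C S))
def kM2 (A B C S k : ℂ) : ℂ := (kM' A B C S k)*(kD A B C S) - 3*(kM A B C S k)*(kD' A B C S)
  - Complex.I*k*(kM A B C S k)*(kD A B C S)

lemma key0 (M M2 N D Dp k s : ℂ) (hs0 : s ≠ 0) (hD : D ≠ 0)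
    (hP : 2*Complex.I*k*s^2*M*D - N^3*D^2 + s^2*M2 + 2*Complex.I*s^3*(M - N^3*Dp) = 0) :
    2*Complex.I*k*(M / D^3) - N^3/(s^2*D^2) + M2 / D^4 + 2*Complex.I*s*(M - N^3*Dp)/D^4 = 0 := by
  have h4 : s^2 * D^4 ≠ 0 := mul_ne_zero (pow_ne_zero _ hs0) (pow_ne_zero _ hD)
  have t1 : (2*Complex.I*k*(M / D^3)) * (s^2*D^4) = 2*Complex.I*k*s^2*M*D := by
    field_simp
  have t2 : (N^3/(s^2*D^2)) * (s^2*D^4) = N^3*D^2 := by field_simp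
  have t3 : (M2 / D^4) * (s^2*D^4) = s^2*M2 := by field_simp
  have t4 : (2*Complex.I*s*(M - N^3*Dp)/D^4) * (s^2*D^4) = 2*Complex.I*s^3*(M - N^3*Dp) := by
    field_simp
  have hX : (2*Complex.I*k*(M / D^3) - N^3/(s^2*D^2) + M2 / D^4 + 2*Complex.I*s*(M - N^3*Dp)/D^4) * (s^2*D^4) = 0 := by
    linear_combination t1 - t2 + t3 + t4 + hP
  rcases mul_eq_zero.mp hX with h | h
  · exact h
  · exact absurd h h4

lemma key (A B C S k s : ℂ) (hs0 : s ≠ 0) (hD : kD A B C S ≠ 0)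
    (h1 : A^2 + B^2 = 1) (h2 : C^2 = S^2 + 1)
    (hks : k*s = A^2 - B^2) (hs2 : s = 2*A*B) :
    2*Complex.I*k*(kM A B C S k / (kD A B C S)^3)
      - (kN A B C S)^3/(s^2*(kD A B C S)^2)
      + kM2 A B C S k / (kD A B C S)^4
      + 2*Complex.I*s*(kM A B C S k - (kN A B C S)^3 * kD' A B C S)/(kD A B C S)^4 = 0 := by
  have hI : Complex.I^2 = -1 := Complex.I_sq
  refine key0 _ _ _ _ _ _ _ hs0 hD ?_
  simp only [kM2, kM', kM, kN, kN', kD, kD', kD'']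
  linear_combination (((-72)*B^3*C^4*S*Complex.I) + ((-72)*B^3*C^4*S^3*Complex.I) + (72*B^3*C^6*S*Complex.I) + (272*B^5*C^2*S^3*Complex.I) + (272*B^5*C^2*S^5*Complex.I) + (48*B^5*C^4*S*Complex.I) + ((-224)*B^5*C^4*S^3*Complex.I) + ((-48)*B^5*C^6*S*Complex.I) + ((-40)*B^7*S^5*Complex.I) + ((-39)*B^7*S^7*Complex.I) + ((-336)*B^7*C^2*S^3*Complex.I) + ((-296)*B^7*C^2*S^5*Complex.I) + (120*B^7*C^4*S*Complex.I) + (456*B^7*C^4*S^3*Complex.I) + ((-120)*B^7*C^6*S*Complex.I) + (32*B^9*S^5*Complex.I) + (33*B^9*S^7*Complex.I) + (64*B^9*C^2*S^3*Complex.I) + (32*B^9*C^2*S^5*Complex.I) + ((-96)*B^9*C^4*S*Complex.I) + ((-160)*B^9*C^4*S^3*Complex.I) + (96*B^9*C^6*S*Complex.I) + (8*A*B^2*C^5) + (8*A*B^2*C^5*S^2) + ((-8)*A*B^2*C^7) + ((-208)*A*B^4*C^3*S^2) + ((-208)*A*B^4*C^3*S^4) + (16*A*B^4*C^5) + (224*A*B^4*C^5*S^2)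 + ((-16)*A*B^4*C^7) + (168*A*B^6*C*S^4) + (165*A*B^6*C*S^6) + (144*A*B^6*C^3*S^2) + ((-24)*A*B^6*C^3*S^4) + ((-56)*A*B^6*C^5) + ((-200)*A*B^6*C^5*S^2) + (56*A*B^6*C^7) + ((-96)*A*B^8*C*S^4) + ((-99)*A*B^8*C*S^6) + (64*A*B^8*C^3*S^2) + (160*A*B^8*C^3*S^4) + (32*A*B^8*C^5) + ((-32)*A*B^8*C^5*S^2) + ((-32)*A*B^8*C^7) + ((-72)*A^2*B^3*C^4*S*Complex.I) + ((-72)*A^2*B^3*C^4*S^3*Complex.I) + (72*A^2*B^3*C^6*S*Complex.I) + (272*A^2*B^5*C^2*S^3*Complex.I) + (271*A^2*B^5*C^2*S^5*Complex.I) + ((-24)*A^2*B^5*C^4*S*Complex.I) + ((-296)*A^2*B^5*C^4*S^3*Complex.I) + (24*A^2*B^5*C^6*S*Complex.I) + ((-40)*A^2*B^7*S^5*Complex.I) + ((-39)*A^2*B^7*S^7*Complex.I) + ((-64)*A^2*B^7*C^2*S^3*Complex.I) + ((-25)*A^2*B^7*C^2*S^5*Complex.I) + (96*A^2*B^7*C^4*S*Complex.I)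 + (160*A^2*B^7*C^4*S^3*Complex.I) + ((-96)*A^2*B^7*C^6*S*Complex.I) + (8*A^3*B^2*C^5) + (8*A^3*B^2*C^5*S^2) + ((-8)*A^3*B^2*C^7) + ((-208)*A^3*B^4*C^3*S^2) + ((-213)*A^3*B^4*C^3*S^4) + (24*A^3*B^4*C^5) + (232*A^3*B^4*C^5*S^2) + ((-24)*A^3*B^4*C^7) + (168*A^3*B^6*C*S^4) + (165*A^3*B^6*C*S^6) + ((-64)*A^3*B^6*C^3*S^2) + ((-237)*A^3*B^6*C^3*S^4) + ((-32)*A^3*B^6*C^5) + (32*A^3*B^6*C^5*S^2) + (32*A^3*B^6*C^7) + ((-72)*A^4*B^3*C^4*S*Complex.I) + ((-77)*A^4*B^3*C^4*S^3*Complex.I) + (72*A^4*B^3*C^6*S*Complex.I) + (272*A^4*B^5*C^2*S^3*Complex.I) + (271*A^4*B^5*C^2*S^5*Complex.I) + ((-96)*A^4*B^5*C^4*S*Complex.I) + ((-373)*A^4*B^5*C^4*S^3*Complex.I) + (96*A^4*B^5*C^6*S*Complex.I) + (8*A^5*B^2*C^5) + (7*A^5*B^2*C^5*S^2) + ((-8)*A^5*B^2*C^7)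 + ((-208)*A^5*B^4*C^3*S^2) + ((-213)*A^5*B^4*C^3*S^4) + (32*A^5*B^4*C^5) + (239*A^5*B^4*C^5*S^2) + ((-32)*A^5*B^4*C^7) + ((-3)*A^6*B*C^6*S*Complex.I) + ((-72)*A^6*B^3*C^4*S*Complex.I) + ((-77)*A^6*B^3*C^4*S^3*Complex.I) + (69*A^6*B^3*C^6*S*Complex.I) + (A^7*C^7) + (8*A^7*B^2*C^5) + (7*A^7*B^2*C^5*S^2) + ((-7)*A^7*B^2*C^7) + ((-3)*A^8*B*C^6*S*Complex.I) + (A^9*C^7))*h1 + ((72*B^3*C^4*S*Complex.I) + ((-272)*B^5*C^2*S^3*Complex.I) + ((-120)*B^5*C^4*S*Complex.I) + (40*B^7*S^5*Complex.I) + (608*B^7*C^2*S^3*Complex.I) + ((-72)*B^7*C^4*S*Complex.I) + ((-72)*B^9*S^5*Complex.I) + ((-400)*B^9*C^2*S^3*Complex.I) + (216*B^9*C^4*S*Complex.I) + (32*B^11*S^5*Complex.I) + (64*B^11*C^2*S^3*Complex.I) + ((-96)*B^11*C^4*S*Complex.I) + ((-8)*A*B^2*C^5) + (208*A*B^4*C^3*S^2)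 + ((-8)*A*B^4*C^5) + ((-168)*A*B^6*C*S^4) + ((-352)*A*B^6*C^3*S^2) + (72*A*B^6*C^5) + (264*A*B^8*C*S^4) + (80*A*B^8*C^3*S^2) + ((-88)*A*B^8*C^5) + ((-96)*A*B^10*C*S^4) + (64*A*B^10*C^3*S^2) + (32*A*B^10*C^5))*h2 + ((2*B^5*S^5*s^2*Complex.I) + (B^7*S^7*k*s*Complex.I) + ((-1)*B^9*S^7*Complex.I) + ((-6)*A*B^4*C*S^4*s^2) + ((-3)*A*B^6*C*S^6*k*s) + (3*A*B^8*C*S^6) + ((-4)*A^2*B^3*C^2*S^3*s^2*Complex.I) + ((-1)*A^2*B^5*C^2*S^5*k*s*Complex.I) + (A^2*B^7*S^7*Complex.I) + (A^2*B^7*C^2*S^5*Complex.I) + ((-4)*A^3*B^2*C^3*S^2*s^2) + ((-5)*A^3*B^4*C^3*S^4*k*s) + ((-3)*A^3*B^6*C*S^6) + (5*A^3*B^6*C^3*S^4) + ((-6)*A^4*B*C^4*S*s^2*Complex.I) + ((-5)*A^4*B^3*C^4*S^3*k*s*Complex.I) + ((-1)*A^4*B^5*C^2*S^5*Complex.I)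 + (5*A^4*B^5*C^4*S^3*Complex.I) + (2*A^5*C^5*s^2) + ((-1)*A^5*B^2*C^5*S^2*k*s) + ((-5)*A^5*B^4*C^3*S^4) + (A^5*B^4*C^5*S^2) + ((-3)*A^6*B*C^6*S*k*s*Complex.I) + ((-5)*A^6*B^3*C^4*S^3*Complex.I) + (3*A^6*B^3*C^6*S*Complex.I) + (A^7*C^7*k*s) + ((-1)*A^7*B^2*C^5*S^2) + ((-1)*A^7*B^2*C^7) + ((-3)*A^8*B*C^6*S*Complex.I) + (A^9*C^7))*hks + ((6*B^5*C*S^4*s^2) + ((-2)*B^7*S^5*s*Complex.I) + ((-1)*B^7*S^7*s*Complex.I) + (2*B^7*C^2*S^5*s*Complex.I) + ((-6)*A*B^4*S^5*s^2*Complex.I) + (24*A*B^4*C^2*S^3*s^2*Complex.I) + (18*A*B^6*C*S^4*s) + (15*A*B^6*C*S^6*s) + ((-18)*A*B^6*C^3*S^4*s) + ((-4)*A*B^8*S^5*Complex.I) + ((-2)*A*B^8*S^7*Complex.I) + (4*A*B^8*C^2*S^5*Complex.I) + (24*A^2*B^3*C*S^4*s^2) + ((-36)*A^2*B^3*C^3*S^2*s^2)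 + ((-10)*A^2*B^5*S^5*s*Complex.I) + ((-10)*A^2*B^5*S^7*s*Complex.I) + (52*A^2*B^5*C^2*S^3*s*Complex.I) + (61*A^2*B^5*C^2*S^5*s*Complex.I) + ((-52)*A^2*B^5*C^4*S^3*s*Complex.I) + (36*A^2*B^7*C*S^4) + (30*A^2*B^7*C*S^6) + ((-36)*A^2*B^7*C^3*S^4) + (36*A^3*B^2*C^2*S^3*s^2*Complex.I) + ((-24)*A^3*B^2*C^4*S*s^2*Complex.I) + (42*A^3*B^4*C*S^4*s) + (42*A^3*B^4*C*S^6*s) + ((-68)*A^3*B^4*C^3*S^2*s) + ((-115)*A^3*B^4*C^3*S^4*s) + (68*A^3*B^4*C^5*S^2*s) + ((-20)*A^3*B^6*S^5*Complex.I) + ((-20)*A^3*B^6*S^7*Complex.I) + (104*A^3*B^6*C^2*S^3*Complex.I) + (122*A^3*B^6*C^2*S^5*Complex.I) + ((-104)*A^3*B^6*C^4*S^3*Complex.I) + ((-24)*A^4*B*C^3*S^2*s^2) + (6*A^4*B*C^5*s^2) + (68*A^4*B^3*C^2*S^3*s*Complex.I) + (68*A^4*B^3*C^2*S^5*s*Complex.I)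 + ((-42)*A^4*B^3*C^4*S*s*Complex.I) + ((-115)*A^4*B^3*C^4*S^3*s*Complex.I) + (42*A^4*B^3*C^6*S*s*Complex.I) + (84*A^4*B^5*C*S^4) + (84*A^4*B^5*C*S^6) + ((-136)*A^4*B^5*C^3*S^2) + ((-230)*A^4*B^5*C^3*S^4) + (136*A^4*B^5*C^5*S^2) + ((-6)*A^5*C^4*S*s^2*Complex.I) + ((-52)*A^5*B^2*C^3*S^2*s) + ((-52)*A^5*B^2*C^3*S^4*s) + (10*A^5*B^2*C^5*s) + (61*A^5*B^2*C^5*S^2*s) + ((-10)*A^5*B^2*C^7*s) + (136*A^5*B^4*C^2*S^3*Complex.I) + (136*A^5*B^4*C^2*S^5*Complex.I) + ((-84)*A^5*B^4*C^4*S*Complex.I) + ((-230)*A^5*B^4*C^4*S^3*Complex.I) + (84*A^5*B^4*C^6*S*Complex.I) + ((-18)*A^6*B*C^4*S*s*Complex.I) + ((-18)*A^6*B*C^4*S^3*s*Complex.I) + (15*A^6*B*C^6*S*s*Complex.I) + ((-104)*A^6*B^3*C^3*S^2) + ((-104)*A^6*B^3*C^3*S^4) + (20*A^6*B^3*C^5)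 + (122*A^6*B^3*C^5*S^2) + ((-20)*A^6*B^3*C^7) + (2*A^7*C^5*s) + (2*A^7*C^5*S^2*s) + ((-1)*A^7*C^7*s) + ((-36)*A^7*B^2*C^4*S*Complex.I) + ((-36)*A^7*B^2*C^4*S^3*Complex.I) + (30*A^7*B^2*C^6*S*Complex.I) + (4*A^8*B*C^5) + (4*A^8*B*C^5*S^2) + ((-2)*A^8*B*C^7))*hs2 + (((-2)*B^5*S^5*k*s^3*Complex.I) + (2*B^5*S^5*k*s^3*Complex.I^3) + ((-6)*B^5*C*S^4*s^3) + (6*B^5*C*S^4*s^3*Complex.I^2) + (B^7*S^7*Complex.I) + (B^7*S^7*s^2*Complex.I) + ((-1)*B^7*S^7*k^2*s^2*Complex.I) + (B^7*S^7*k^2*s^2*Complex.I^3) + ((-2)*B^7*C^2*S^5*s^2*Complex.I) + (6*A*B^4*S^5*s^3*Complex.I) + (6*A*B^4*C*S^4*k*s^3) + ((-6)*A*B^4*C*S^4*k*s^3*Complex.I^2) + ((-24)*A*B^4*C^2*S^3*s^3*Complex.I) + ((-3)*A*B^6*C*S^6) + ((-15)*A*B^6*C*S^6*s^2) + (3*A*B^6*C*S^6*k^2*s^2)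 + ((-3)*A*B^6*C*S^6*k^2*s^2*Complex.I^2) + (18*A*B^6*C^3*S^4*s^2) + ((-24)*A^2*B^3*C*S^4*s^3) + (12*A^2*B^3*C*S^4*s^3*Complex.I^2) + (4*A^2*B^3*C^2*S^3*k*s^3*Complex.I) + (2*A^2*B^3*C^2*S^3*k*s^3*Complex.I^3) + (36*A^2*B^3*C^3*S^2*s^3) + ((-6)*A^2*B^3*C^3*S^2*s^3*Complex.I^2) + (4*A^2*B^5*S^7*s^2*Complex.I) + (2*A^2*B^5*C^2*S^5*Complex.I) + ((-22)*A^2*B^5*C^2*S^5*s^2*Complex.I) + (A^2*B^5*C^2*S^5*k^2*s^2*Complex.I) + (2*A^2*B^5*C^2*S^5*k^2*s^2*Complex.I^3) + (16*A^2*B^5*C^4*S^3*s^2*Complex.I) + ((-30)*A^3*B^2*C^2*S^3*s^3*Complex.I) + (4*A^3*B^2*C^3*S^2*k*s^3) + ((-6)*A^3*B^2*C^3*S^2*k*s^3*Complex.I^2) + (12*A^3*B^2*C^4*S*s^3*Complex.I) + ((-36)*A^3*B^4*C*S^6*s^2) + ((-6)*A^3*B^4*C^3*S^4) + (90*A^3*B^4*C^3*S^4*s^2)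 + (5*A^3*B^4*C^3*S^4*k^2*s^2) + ((-6)*A^3*B^4*C^3*S^4*k^2*s^2*Complex.I^2) + ((-48)*A^3*B^4*C^5*S^2*s^2) + (24*A^4*B*C^3*S^2*s^3) + (6*A^4*B*C^4*S*k*s^3*Complex.I) + ((-6)*A^4*B*C^5*s^3) + ((-20)*A^4*B^3*C^2*S^5*s^2*Complex.I) + (A^4*B^3*C^4*S^3*Complex.I) + (25*A^4*B^3*C^4*S^3*s^2*Complex.I) + (5*A^4*B^3*C^4*S^3*k^2*s^2*Complex.I) + (A^4*B^3*C^4*S^3*k^2*s^2*Complex.I^3) + ((-6)*A^4*B^3*C^6*S*s^2*Complex.I) + ((-2)*A^5*C^5*k*s^3) + (36*A^5*B^2*C^3*S^4*s^2) + ((-3)*A^5*B^2*C^5*S^2) + ((-39)*A^5*B^2*C^5*S^2*s^2) + (A^5*B^2*C^5*S^2*k^2*s^2) + ((-3)*A^5*B^2*C^5*S^2*k^2*s^2*Complex.I^2) + (6*A^5*B^2*C^7*s^2) + (3*A^6*B*C^6*S*k^2*s^2*Complex.I) + ((-1)*A^7*C^7*k^2*s^2))*hI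

def rden (θ u : ℝ) : ℝ := Real.cos θ^2*Real.cosh u^2 + Real.sin θ^2*Real.sinh u^2
def rden' (θ u : ℝ) : ℝ := Real.cos θ^2*(2*Real.cosh u*Real.sinh u) + Real.sin θ^2*(2*Real.sinh u*Real.cosh u)
def rden'' (θ u : ℝ) : ℝ := Real.cos θ^2*(2*(Real.sinh u^2+Real.cosh u^2)) + Real.sin θ^2*(2*(Real.cosh u^2+Real.sinh u^2))
def cd (θ u : ℝ) : ℂ := ((rden θ u : ℝ) : ℂ)
def cd' (θ u : ℝ) : ℂ := ((rden' θ u : ℝ) : ℂ)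
def cd'' (θ u : ℝ) : ℂ := ((rden'' θ u : ℝ) : ℂ)
def cN (θ u : ℝ) : ℂ := kN (Real.cos θ : ℂ) (Real.sin θ : ℂ) (Real.cosh u : ℂ) (Real.sinh u : ℂ)
def cN' (θ u : ℝ) : ℂ := kN' (Real.cos θ : ℂ) (Real.sin θ : ℂ) (Real.cosh u : ℂ) (Real.sinh u : ℂ)
def cE (θ u : ℝ) : ℂ := Complex.exp (-(Complex.I * (u:ℂ) * (Real.cot (2*θ) : ℂ)))
def c1 (θ : ℝ) : ℂ := ((Real.sqrt (2*Real.sin (2*θ)) : ℝ) : ℂ)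
def cκ (θ : ℝ) : ℂ := ((Real.cot (2*θ) : ℝ) : ℂ)
def cM (θ u : ℝ) : ℂ := 3*(cN θ u)^2*(cN' θ u)*(cd θ u) - 2*(cN θ u)^3*(cd' θ u)
  - Complex.I*(cκ θ)*(cN θ u)^3*(cd θ u)
def cMp (θ u : ℝ) : ℂ := 6*(cN θ u)*(cN' θ u)^2*(cd θ u) + 3*(cN θ u)^2*(cN θ u)*(cd θ u)
  + 3*(cN θ u)^2*(cN' θ u)*(cd' θ u) - 6*(cN θ u)^2*(cN' θ u)*(cd' θ u)
  - 2*(cN θ u)^3*(cd'' θ u)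
  - Complex.I*(cκ θ)*(3*(cN θ u)^2*(cN' θ u)*(cd θ u) + (cN θ u)^3*(cd' θ u))
def cM2 (θ u : ℝ) : ℂ := (cMp θ u)*(cd θ u) - 3*(cM θ u)*(cd' θ u) - Complex.I*(cκ θ)*(cM θ u)*(cd θ u)
def g0 (θ u : ℝ) : ℂ := c1 θ * (cN θ u)^3 / (cd θ u)^2 * cE θ u
def g1 (θ u : ℝ) : ℂ := c1 θ * cM θ u / (cd θ u)^3 * cE θ u
def g2 (θ u : ℝ) : ℂ := c1 θ * cM2 θ u / (cd θ u)^4 * cE θ u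

lemma hd_sq {f : ℝ → ℂ} {f' : ℂ} {u : ℝ} (h : HasDerivAt f f' u) :
    HasDerivAt (fun v => (f v)^2) (2*(f u)*f') u := by
  have h2 := h.fun_mul h
  have he : (fun v => f v * f v) = fun v => (f v)^2 := funext fun v => by ring
  rw [he] at h2
  convert h2 using 1
  any_goals rfl
  all_goals ring

lemma hd_cube {f : ℝ → ℂ} {f' : ℂ} {u : ℝ} (h : HasDerivAt f f' u) :
    HasDerivAt (fun v => (f v)^3) (3*(f u)^2*f') u := by
  have h3 := (h.fun_mul h).fun_mul h
  have he : (fun v => f v * f v * f v) = fun v => (f v)^3 := funext fun v => by ring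
  rw [he] at h3
  convert h3 using 1
  any_goals rfl
  all_goals ring

lemma hd_pow4 {f : ℝ → ℂ} {f' : ℂ} {u : ℝ} (h : HasDerivAt f f' u) :
    HasDerivAt (fun v => (f v)^4) (4*(f u)^3*f') u := by
  have h4 := ((h.fun_mul h).fun_mul h).fun_mul h
  have he : (fun v => f v * f v * f v * f v) = fun v => (f v)^4 := funext fun v => by ring
  rw [he] at h4
  convert h4 using 1
  any_goals rfl
  all_goals ring

lemma rden_pos (θ u : ℝ) (ha : Real.cos θ ≠ 0) : 0 < rden θ u := by
  have h2 : 0 < Real.cos θ ^ 2 := by rcases ha.lt_or_gt with h|h <;> nlinarith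
  have h3 := Real.cosh_pos u
  have h4 : 0 < Real.cos θ^2 * Real.cosh u^2 := mul_pos h2 (pow_pos h3 2)
  have h5 : 0 ≤ Real.sin θ^2 * Real.sinh u^2 := by positivity
  unfold rden; linarith

lemma hasDerivAt_rden (θ u : ℝ) : HasDerivAt (fun v => rden θ v) (rden' θ u) u := by
  have h := (((Real.hasDerivAt_cosh u).fun_pow 2).const_mul (Real.cos θ^2)).fun_add
    (((Real.hasDerivAt_sinh u).fun_pow 2).const_mul (Real.sin θ^2))
  convert h using 1
  any_goals rfl
  all_goals simp [rden']
  all_goals ring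

lemma hasDerivAt_rden' (θ u : ℝ) : HasDerivAt (fun v => rden' θ v) (rden'' θ u) u := by
  have h := ((((Real.hasDerivAt_cosh u).fun_mul (Real.hasDerivAt_sinh u)).const_mul 2).const_mul (Real.cos θ^2)).fun_add
    ((((Real.hasDerivAt_sinh u).fun_mul (Real.hasDerivAt_cosh u)).const_mul 2).const_mul (Real.sin θ^2))
  have he : (fun v => Real.cos θ^2 * (2*(Real.cosh v * Real.sinh v)) + Real.sin θ^2 * (2*(Real.sinh v * Real.cosh v)))
      = fun v => rden' θ v := funext fun v => by simp [rden']; ring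
  rw [he] at h
  convert h using 1
  any_goals rfl
  all_goals simp [rden'']
  all_goals ring

lemma hasDerivAt_cd (θ u : ℝ) : HasDerivAt (fun v => cd θ v) (cd' θ u) u :=
  (hasDerivAt_rden θ u).ofReal_comp

lemma hasDerivAt_cdp (θ u : ℝ) : HasDerivAt (fun v => cd' θ v) (cd'' θ u) u :=
  (hasDerivAt_rden' θ u).ofReal_comp

lemma hasDerivAt_cN (θ u : ℝ) : HasDerivAt (fun v => cN θ v) (cN' θ u) u := by
  have h := (((Real.hasDerivAt_cosh u).ofReal_comp).const_mul ((Real.cos θ : ℝ):ℂ)).fun_sub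
    (((Real.hasDerivAt_sinh u).ofReal_comp).const_mul (Complex.I * ((Real.sin θ : ℝ):ℂ)))
  have he : (fun v : ℝ => (Real.cos θ : ℂ) * (Real.cosh v : ℂ) - Complex.I * (Real.sin θ : ℂ) * (Real.sinh v : ℂ))
      = fun v => cN θ v := funext fun v => by simp [cN, kN]
  rw [← he]
  convert h using 1
  any_goals rfl
  all_goals simp [cN', kN']
  all_goals ring

lemma hasDerivAt_cNp (θ u : ℝ) : HasDerivAt (fun v => cN' θ v) (cN θ u) u := by
  have h := (((Real.hasDerivAt_sinh u).ofReal_comp).const_mul ((Real.cos θ : ℝ):ℂ)).fun_sub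
    (((Real.hasDerivAt_cosh u).ofReal_comp).const_mul (Complex.I * ((Real.sin θ : ℝ):ℂ)))
  have he : (fun v : ℝ => (Real.cos θ : ℂ) * (Real.sinh v : ℂ) - Complex.I * (Real.sin θ : ℂ) * (Real.cosh v : ℂ))
      = fun v => cN' θ v := funext fun v => by simp [cN', kN']
  rw [← he]
  convert h using 1
  any_goals rfl
  all_goals simp [cN, kN]
  all_goals ring

lemma hasDerivAt_cE (θ u : ℝ) : HasDerivAt (fun v => cE θ v) (cE θ u * (-(Complex.I * cκ θ))) u := by
  have h : HasDerivAt (fun z : ℂ => Complex.exp (-(Complex.I * z * ((Real.cot (2*θ):ℝ):ℂ))))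
      (Complex.exp (-(Complex.I * (u:ℂ) * ((Real.cot (2*θ):ℝ):ℂ))) * (-(Complex.I * ((Real.cot (2*θ):ℝ):ℂ)))) (u:ℂ) := by
    simpa using ((((hasDerivAt_id ((u:ℝ):ℂ)).const_mul Complex.I).mul_const ((Real.cot (2*θ):ℝ):ℂ)).neg).cexp
  exact h.comp_ofReal

lemma hasDerivAt_g0 (θ u : ℝ) (hd : rden θ u ≠ 0) : HasDerivAt (fun v => g0 θ v) (g1 θ u) u := by
  have hdc : cd θ u ≠ 0 := by simpa [cd] using hd
  have hnum := (hd_cube (hasDerivAt_cN θ u)).const_mul (c1 θ)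
  have hden := hd_sq (hasDerivAt_cd θ u)
  have hfrac := hnum.fun_div hden (pow_ne_zero 2 hdc)
  have h := hfrac.fun_mul (hasDerivAt_cE θ u)
  convert h using 1
  any_goals rfl
  all_goals simp only [g1, cM]
  all_goals (field_simp; ring)

lemma hasDerivAt_cM (θ u : ℝ) : HasDerivAt (fun v => cM θ v) (cMp θ u) u := by
  have hN := hasDerivAt_cN θ u
  have hNp := hasDerivAt_cNp θ u
  have hD := hasDerivAt_cd θ u
  have hDp := hasDerivAt_cdp θ u
  have t1 := (((hd_sq hN).const_mul 3).fun_mul hNp).fun_mul hD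
  have t2 := ((hd_cube hN).const_mul 2).fun_mul hDp
  have t3 := ((hd_cube hN).const_mul (Complex.I * cκ θ)).fun_mul hD
  have h := (t1.fun_sub t2).fun_sub t3
  have he : (fun v => 3*(cN θ v)^2*(cN' θ v)*(cd θ v) - 2*(cN θ v)^3*(cd' θ v)
      - Complex.I*(cκ θ)*(cN θ v)^3*(cd θ v)) = fun v => cM θ v := funext fun v => by
    simp [cM]
  rw [← he]
  convert h using 1
  any_goals rfl
  all_goals simp only [cMp]
  all_goals ring

lemma hasDerivAt_g1 (θ u : ℝ) (hd : rden θ u ≠ 0) : HasDerivAt (fun v => g1 θ v) (g2 θ u) u := by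
  have hdc : cd θ u ≠ 0 := by simpa [cd] using hd
  have hnum := (hasDerivAt_cM θ u).const_mul (c1 θ)
  have hden := hd_cube (hasDerivAt_cd θ u)
  have hfrac := hnum.fun_div hden (pow_ne_zero 3 hdc)
  have h := hfrac.fun_mul (hasDerivAt_cE θ u)
  convert h using 1
  any_goals rfl
  all_goals simp only [g2, cM2]
  all_goals (field_simp; ring)

lemma normSq_cN (θ u : ℝ) : Complex.normSq (cN θ u) = rden θ u := by
  simp only [cN, kN, Complex.normSq_apply, Complex.sub_re, Complex.sub_im, Complex.mul_re,
    Complex.mul_im, Complex.I_re, Complex.I_im, Complex.ofReal_re, Complex.ofReal_im, rden]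
  ring

lemma abs_g0_sq (θ u : ℝ) (hσ : 0 ≤ 2*Real.sin (2*θ)) (hd : 0 < rden θ u) :
    (‖g0 θ u‖)^2 = 2*Real.sin (2*θ)/rden θ u := by
  have hNsq : (‖cN θ u‖)^2 = rden θ u := by
    rw [Complex.sq_norm, normSq_cN]
  have hre : (-(Complex.I * (u:ℂ) * ((Real.cot (2*θ):ℝ):ℂ))).re = 0 := by
    simp only [Complex.neg_re, Complex.mul_re, Complex.mul_im, Complex.I_re, Complex.I_im,
      Complex.ofReal_re, Complex.ofReal_im]
    ring
  have hE : ‖cE θ u‖ = 1 := by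
    rw [cE, Complex.norm_exp, hre, Real.exp_zero]
  have hc1 : ‖c1 θ‖ = Real.sqrt (2*Real.sin (2*θ)) := by
    rw [c1, Complex.norm_real, Real.norm_eq_abs, _root_.abs_of_nonneg (Real.sqrt_nonneg _)]
  have hcd : ‖(cd θ u)^2‖ = (rden θ u)^2 := by
    rw [norm_pow, cd, Complex.norm_real, Real.norm_eq_abs, _root_.abs_of_pos hd]
  have expand : ‖g0 θ u‖
      = Real.sqrt (2*Real.sin (2*θ)) * (‖cN θ u‖)^3 / (rden θ u)^2 := by
    rw [g0, norm_mul, norm_div, norm_mul, norm_pow, hc1, hE, mul_one, ← norm_pow, hcd]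
  rw [expand, div_pow, mul_pow, Real.sq_sqrt hσ,
    show ((‖cN θ u‖)^3)^2 = ((‖cN θ u‖)^2)^3 from by ring, hNsq]
  rw [div_eq_div_iff (by positivity) hd.ne']
  ring

lemma contDiff_g0 (θ : ℝ) (ha : Real.cos θ ≠ 0) : ContDiff ℝ (⊤ : ℕ∞) (fun u => g0 θ u) := by
  have hC : ContDiff ℝ (⊤ : ℕ∞) (fun u : ℝ => ((Real.cosh u : ℝ) : ℂ)) :=
    Complex.ofRealCLM.contDiff.comp Real.contDiff_cosh
  have hS : ContDiff ℝ (⊤ : ℕ∞) (fun u : ℝ => ((Real.sinh u : ℝ) : ℂ)) :=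
    Complex.ofRealCLM.contDiff.comp Real.contDiff_sinh
  have hNs : ContDiff ℝ (⊤ : ℕ∞) (fun u => cN θ u) := by
    simp only [cN, kN]
    exact (contDiff_const.mul hC).sub (contDiff_const.mul hS)
  have hrden : ContDiff ℝ (⊤ : ℕ∞) (fun u => rden θ u) := by
    simp only [rden]
    exact (contDiff_const.mul (Real.contDiff_cosh.pow 2)).add
      (contDiff_const.mul (Real.contDiff_sinh.pow 2))
  have hds : ContDiff ℝ (⊤ : ℕ∞) (fun u => cd θ u) := Complex.ofRealCLM.contDiff.comp hrden
  have hdne : ∀ u, cd θ u ≠ 0 := fun u => by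
    simpa [cd] using (rden_pos θ u ha).ne'
  have hEs : ContDiff ℝ (⊤ : ℕ∞) (fun u => cE θ u) := by
    simp only [cE]
    apply Complex.contDiff_exp.comp
    have hid : ContDiff ℝ (⊤ : ℕ∞) (fun u : ℝ => ((u : ℝ) : ℂ)) := Complex.ofRealCLM.contDiff
    exact ((contDiff_const.mul hid).mul contDiff_const).neg
  have hinv : ContDiff ℝ (⊤ : ℕ∞) (fun u => ((cd θ u)^2)⁻¹) :=
    (hds.pow 2).inv fun u => pow_ne_zero 2 (hdne u)
  have hmain : ContDiff ℝ (⊤ : ℕ∞) (fun u => c1 θ * (cN θ u)^3 * ((cd θ u)^2)⁻¹ * cE θ u) :=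
    ((contDiff_const.mul (hNs.pow 3)).mul hinv).mul hEs
  simpa only [g0, div_eq_mul_inv] using hmain


/-- **The DNLS soliton.** For `θ ∈ (0, π/2)`, with
`q₀(x) = √(2 sin 2θ) (cos θ cosh x - i sin θ sinh x)³ /
  (cos²θ cosh²x + sin²θ sinh²x)² · e^{-ix cot 2θ}`,
the function `q(t,x) = q₀(x + 2 cot(2θ) t) e^{it/sin²(2θ)}` solves DNLS. -/
theorem stmt_4 (θ : ℝ) (hθ : θ ∈ Set.Ioo 0 (Real.pi / 2)) :
    let q₀ : ℝ → ℂ := fun x =>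
      (Real.sqrt (2 * Real.sin (2 * θ)) : ℂ)
        * ((Real.cos θ : ℂ) * (Real.cosh x : ℂ)
            - Complex.I * (Real.sin θ : ℂ) * (Real.sinh x : ℂ)) ^ 3
        / ((Real.cos θ ^ 2 * Real.cosh x ^ 2 + Real.sin θ ^ 2 * Real.sinh x ^ 2 : ℝ) : ℂ) ^ 2
        * Complex.exp (-(Complex.I * (x : ℂ) * (Real.cot (2 * θ) : ℂ)))
    IsDNLSSolution (fun p : ℝ × ℝ =>
      q₀ (p.2 + 2 * Real.cot (2 * θ) * p.1)
        * Complex.exp (Complex.I * (p.1 : ℂ) / ((Real.sin (2 * θ) : ℂ)) ^ 2)) := by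
  intro q₀
  obtain ⟨hθ1, hθ2⟩ := hθ
  have hpi := Real.pi_pos
  have ha : 0 < Real.cos θ := Real.cos_pos_of_mem_Ioo ⟨by linarith, hθ2⟩
  have hb : 0 < Real.sin θ := Real.sin_pos_of_pos_of_lt_pi hθ1 (by linarith)
  have hσ : 0 < Real.sin (2*θ) := Real.sin_pos_of_pos_of_lt_pi (by linarith) (by linarith)
  have hσc : ((Real.sin (2*θ) : ℝ) : ℂ) ≠ 0 := Complex.ofReal_ne_zero.mpr hσ.ne'
  have hksr : Real.cot (2*θ) * Real.sin (2*θ) = Real.cos θ^2 - Real.sin θ^2 := by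
    rw [Real.cot_eq_cos_div_sin, div_mul_cancel₀ _ hσ.ne', Real.cos_two_mul']
  refine ⟨?_, ?_⟩
  · show ContDiff ℝ (⊤ : ℕ∞) (fun p : ℝ × ℝ =>
      g0 θ (p.2 + 2*Real.cot (2*θ)*p.1) * Complex.exp (Complex.I * (p.1:ℂ) / (Real.sin (2*θ):ℂ)^2))
    have hu2 : ContDiff ℝ (⊤ : ℕ∞) (fun p : ℝ × ℝ => p.2 + 2*Real.cot (2*θ)*p.1) := by fun_prop
    have hphase : ContDiff ℝ (⊤ : ℕ∞) (fun p : ℝ × ℝ => Complex.exp (Complex.I*(p.1:ℂ)/(Real.sin (2*θ):ℂ)^2)) := by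
      apply Complex.contDiff_exp.comp
      exact (contDiff_const.mul (Complex.ofRealCLM.contDiff.comp contDiff_fst)).div_const _
    exact ((contDiff_g0 θ ha.ne').comp hu2).mul hphase
  · intro t x
    have hdU : rden θ (x + 2*Real.cot (2*θ)*t) ≠ 0 := (rden_pos θ (x + 2*Real.cot (2*θ)*t) ha.ne').ne'
    have hdcU : cd θ (x + 2*Real.cot (2*θ)*t) ≠ 0 := by simpa [cd] using hdU
    show Complex.I * deriv (fun s => g0 θ (x + 2*Real.cot (2*θ)*s) * Complex.exp (Complex.I * (s:ℂ) / (Real.sin (2*θ):ℂ)^2)) t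
      + deriv (deriv (fun y => g0 θ (y + 2*Real.cot (2*θ)*t) * Complex.exp (Complex.I * (t:ℂ) / (Real.sin (2*θ):ℂ)^2))) x
      + Complex.I * deriv (fun y =>
          ((‖g0 θ (y + 2*Real.cot (2*θ)*t) * Complex.exp (Complex.I * (t:ℂ) / (Real.sin (2*θ):ℂ)^2)‖ : ℝ) : ℂ)^2 * (g0 θ (y + 2*Real.cot (2*θ)*t) * Complex.exp (Complex.I * (t:ℂ) / (Real.sin (2*θ):ℂ)^2))) x = 0
    -- t derivative
    have hinner_t : HasDerivAt (fun s : ℝ => x + 2*Real.cot (2*θ)*s) (2*Real.cot (2*θ)) t := by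
      simpa using ((hasDerivAt_id t).const_mul (2*Real.cot (2*θ))).const_add x
    have hcomp_t : HasDerivAt (fun s : ℝ => g0 θ (x + 2*Real.cot (2*θ)*s)) (((2*Real.cot (2*θ) : ℝ) : ℂ) * g1 θ (x + 2*Real.cot (2*θ)*t)) t := by
      simpa [Function.comp_def, Complex.real_smul] using (hasDerivAt_g0 θ (x + 2*Real.cot (2*θ)*t) hdU).scomp t hinner_t
    have hph : HasDerivAt (fun s : ℝ => Complex.exp (Complex.I * (s:ℂ) / (Real.sin (2*θ):ℂ)^2))
        (Complex.exp (Complex.I * (t:ℂ) / (Real.sin (2*θ):ℂ)^2) * (Complex.I / (Real.sin (2*θ):ℂ)^2)) t := by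
      have h : HasDerivAt (fun z : ℂ => Complex.exp (Complex.I * z / (Real.sin (2*θ):ℂ)^2))
          (Complex.exp (Complex.I * (t:ℂ) / (Real.sin (2*θ):ℂ)^2) * (Complex.I / (Real.sin (2*θ):ℂ)^2)) ((t:ℝ):ℂ) := by
        simpa using (((hasDerivAt_id ((t:ℝ):ℂ)).const_mul Complex.I).div_const ((Real.sin (2*θ):ℂ)^2)).cexp
      exact h.comp_ofReal
    have e1 : deriv (fun s => g0 θ (x + 2*Real.cot (2*θ)*s) * Complex.exp (Complex.I * (s:ℂ) / (Real.sin (2*θ):ℂ)^2)) t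
        = ((2*Real.cot (2*θ) : ℝ) : ℂ) * g1 θ (x + 2*Real.cot (2*θ)*t) * Complex.exp (Complex.I * (t:ℂ) / (Real.sin (2*θ):ℂ)^2) + g0 θ (x + 2*Real.cot (2*θ)*t) * (Complex.exp (Complex.I * (t:ℂ) / (Real.sin (2*θ):ℂ)^2) * (Complex.I / (Real.sin (2*θ):ℂ)^2)) :=
      (hcomp_t.fun_mul hph).deriv
    rw [e1]
    -- second x derivative
    have hx1 : ∀ y : ℝ, HasDerivAt (fun y' : ℝ => g0 θ (y' + 2*Real.cot (2*θ)*t) * Complex.exp (Complex.I * (t:ℂ) / (Real.sin (2*θ):ℂ)^2))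
        (g1 θ (y + 2*Real.cot (2*θ)*t) * Complex.exp (Complex.I * (t:ℂ) / (Real.sin (2*θ):ℂ)^2)) y := by
      intro y
      have hin : HasDerivAt (fun y' : ℝ => y' + 2*Real.cot (2*θ)*t) 1 y := (hasDerivAt_id y).add_const _
      have := ((hasDerivAt_g0 θ (y + 2*Real.cot (2*θ)*t) (rden_pos θ _ ha.ne').ne').scomp y hin).mul_const (Complex.exp (Complex.I * (t:ℂ) / (Real.sin (2*θ):ℂ)^2))
      simpa [Function.comp] using this
    have e2a : (deriv fun y : ℝ => g0 θ (y + 2*Real.cot (2*θ)*t) * Complex.exp (Complex.I * (t:ℂ) / (Real.sin (2*θ):ℂ)^2)) = fun y => g1 θ (y + 2*Real.cot (2*θ)*t) * Complex.exp (Complex.I * (t:ℂ) / (Real.sin (2*θ):ℂ)^2) :=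
      funext fun y => (hx1 y).deriv
    rw [e2a]
    have hx2 : HasDerivAt (fun y : ℝ => g1 θ (y + 2*Real.cot (2*θ)*t) * Complex.exp (Complex.I * (t:ℂ) / (Real.sin (2*θ):ℂ)^2)) (g2 θ (x + 2*Real.cot (2*θ)*t) * Complex.exp (Complex.I * (t:ℂ) / (Real.sin (2*θ):ℂ)^2)) x := by
      have hin : HasDerivAt (fun y' : ℝ => y' + 2*Real.cot (2*θ)*t) 1 x := (hasDerivAt_id x).add_const _
      have := ((hasDerivAt_g1 θ (x + 2*Real.cot (2*θ)*t) hdU).scomp x hin).mul_const (Complex.exp (Complex.I * (t:ℂ) / (Real.sin (2*θ):ℂ)^2))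
      simpa [Function.comp] using this
    rw [hx2.deriv]
    -- nonlinear term
    have habsPH : ‖Complex.exp (Complex.I * (t:ℂ) / (Real.sin (2*θ):ℂ)^2)‖ = 1 := by
      rw [show Complex.I * (t:ℂ) / (Real.sin (2*θ):ℂ)^2 = Complex.I * ((t/(Real.sin (2*θ))^2 : ℝ) : ℂ) from by
        push_cast; ring]
      rw [Complex.norm_exp, show (Complex.I * ((t/(Real.sin (2*θ))^2 : ℝ) : ℂ)).re = 0 from by
        simp only [Complex.mul_re, Complex.I_re, Complex.I_im, Complex.ofReal_re, Complex.ofReal_im]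
        ring, Real.exp_zero]
    have hpt : ∀ y : ℝ, ((‖g0 θ (y + 2*Real.cot (2*θ)*t) * Complex.exp (Complex.I * (t:ℂ) / (Real.sin (2*θ):ℂ)^2)‖ : ℝ) : ℂ)^2 * (g0 θ (y + 2*Real.cot (2*θ)*t) * Complex.exp (Complex.I * (t:ℂ) / (Real.sin (2*θ):ℂ)^2))
        = 2*((Real.sin (2*θ) : ℝ):ℂ) * g0 θ (y + 2*Real.cot (2*θ)*t) / cd θ (y + 2*Real.cot (2*θ)*t) * Complex.exp (Complex.I * (t:ℂ) / (Real.sin (2*θ):ℂ)^2) := by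
      intro y
      have h1 : (‖g0 θ (y + 2*Real.cot (2*θ)*t) * Complex.exp (Complex.I * (t:ℂ) / (Real.sin (2*θ):ℂ)^2)‖)^2 = 2*Real.sin (2*θ)/rden θ (y + 2*Real.cot (2*θ)*t) := by
        rw [norm_mul, habsPH, mul_one]
        exact abs_g0_sq θ _ (by linarith) (rden_pos θ _ ha.ne')
      rw [← Complex.ofReal_pow, h1]
      simp only [cd]
      push_cast
      ring
    rw [show (fun y : ℝ => ((‖g0 θ (y + 2*Real.cot (2*θ)*t) * Complex.exp (Complex.I * (t:ℂ) / (Real.sin (2*θ):ℂ)^2)‖ : ℝ) : ℂ)^2 * (g0 θ (y + 2*Real.cot (2*θ)*t) * Complex.exp (Complex.I * (t:ℂ) / (Real.sin (2*θ):ℂ)^2)))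
        = fun y : ℝ => 2*((Real.sin (2*θ) : ℝ):ℂ) * g0 θ (y + 2*Real.cot (2*θ)*t) / cd θ (y + 2*Real.cot (2*θ)*t) * Complex.exp (Complex.I * (t:ℂ) / (Real.sin (2*θ):ℂ)^2) from funext hpt]
    have hg0y : HasDerivAt (fun y : ℝ => g0 θ (y + 2*Real.cot (2*θ)*t)) (g1 θ (x + 2*Real.cot (2*θ)*t)) x := by
      have hin : HasDerivAt (fun y' : ℝ => y' + 2*Real.cot (2*θ)*t) 1 x := (hasDerivAt_id x).add_const _
      simpa [Function.comp_def] using (hasDerivAt_g0 θ (x + 2*Real.cot (2*θ)*t) hdU).scomp x hin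
    have hcdy : HasDerivAt (fun y : ℝ => cd θ (y + 2*Real.cot (2*θ)*t)) (cd' θ (x + 2*Real.cot (2*θ)*t)) x := by
      have hin : HasDerivAt (fun y' : ℝ => y' + 2*Real.cot (2*θ)*t) 1 x := (hasDerivAt_id x).add_const _
      simpa [Function.comp_def] using (hasDerivAt_cd θ (x + 2*Real.cot (2*θ)*t)).scomp x hin
    have hG := ((hg0y.const_mul (2*((Real.sin (2*θ) : ℝ):ℂ))).fun_div hcdy hdcU).mul_const (Complex.exp (Complex.I * (t:ℂ) / (Real.sin (2*θ):ℂ)^2))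
    rw [hG.deriv]
    have hW3 : (2*((Real.sin (2*θ) : ℝ):ℂ) * g1 θ (x + 2*Real.cot (2*θ)*t) * cd θ (x + 2*Real.cot (2*θ)*t) - 2*((Real.sin (2*θ) : ℝ):ℂ) * g0 θ (x + 2*Real.cot (2*θ)*t) * cd' θ (x + 2*Real.cot (2*θ)*t)) / (cd θ (x + 2*Real.cot (2*θ)*t))^2 * Complex.exp (Complex.I * (t:ℂ) / (Real.sin (2*θ):ℂ)^2)
        = 2*((Real.sin (2*θ) : ℝ):ℂ) * (c1 θ * (cM θ (x + 2*Real.cot (2*θ)*t) - (cN θ (x + 2*Real.cot (2*θ)*t))^3 * cd' θ (x + 2*Real.cot (2*θ)*t)) / (cd θ (x + 2*Real.cot (2*θ)*t))^4 * cE θ (x + 2*Real.cot (2*θ)*t)) * Complex.exp (Complex.I * (t:ℂ) / (Real.sin (2*θ):ℂ)^2) := by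
      rw [g0, g1]
      field_simp
    rw [hW3]
    -- algebraic identity
    have hbD : cd θ (x + 2*Real.cot (2*θ)*t) = kD (Real.cos θ : ℂ) (Real.sin θ : ℂ) (Real.cosh (x + 2*Real.cot (2*θ)*t) : ℂ) (Real.sinh (x + 2*Real.cot (2*θ)*t) : ℂ) := by
      simp only [cd, rden, kD]; push_cast; ring
    have hbD' : cd' θ (x + 2*Real.cot (2*θ)*t) = kD' (Real.cos θ : ℂ) (Real.sin θ : ℂ) (Real.cosh (x + 2*Real.cot (2*θ)*t) : ℂ) (Real.sinh (x + 2*Real.cot (2*θ)*t) : ℂ) := by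
      simp only [cd', rden', kD']; push_cast; ring
    have hbD'' : cd'' θ (x + 2*Real.cot (2*θ)*t) = kD'' (Real.cos θ : ℂ) (Real.sin θ : ℂ) (Real.cosh (x + 2*Real.cot (2*θ)*t) : ℂ) (Real.sinh (x + 2*Real.cot (2*θ)*t) : ℂ) := by
      simp only [cd'', rden'', kD'']; push_cast; ring
    have hbM : cM θ (x + 2*Real.cot (2*θ)*t) = kM (Real.cos θ : ℂ) (Real.sin θ : ℂ) (Real.cosh (x + 2*Real.cot (2*θ)*t) : ℂ) (Real.sinh (x + 2*Real.cot (2*θ)*t) : ℂ) ((Real.cot (2*θ) : ℝ) : ℂ) := by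
      simp only [cM, cN, cN', cκ, kM]; rw [hbD, hbD']
    have hbM2 : cM2 θ (x + 2*Real.cot (2*θ)*t) = kM2 (Real.cos θ : ℂ) (Real.sin θ : ℂ) (Real.cosh (x + 2*Real.cot (2*θ)*t) : ℂ) (Real.sinh (x + 2*Real.cot (2*θ)*t) : ℂ) ((Real.cot (2*θ) : ℝ) : ℂ) := by
      simp only [cM2, cMp, cM, cN, cN', cκ, kM2, kM', kM]; rw [hbD, hbD', hbD'']
    have h1c : (Real.cos θ : ℂ)^2 + (Real.sin θ : ℂ)^2 = 1 := by
      have h := Real.sin_sq_add_cos_sq θ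
      exact_mod_cast (by linarith : Real.cos θ^2 + Real.sin θ^2 = 1)
    have h2c : (Real.cosh (x + 2*Real.cot (2*θ)*t) : ℂ)^2 = (Real.sinh (x + 2*Real.cot (2*θ)*t) : ℂ)^2 + 1 := by exact_mod_cast Real.cosh_sq (x + 2*Real.cot (2*θ)*t)
    have hksc : ((Real.cot (2*θ) : ℝ) : ℂ) * ((Real.sin (2*θ) : ℝ) : ℂ) = (Real.cos θ : ℂ)^2 - (Real.sin θ : ℂ)^2 := by exact_mod_cast hksr
    have hs2c : ((Real.sin (2*θ) : ℝ) : ℂ) = 2*(Real.cos θ : ℂ)*(Real.sin θ : ℂ) := by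
      exact_mod_cast (by rw [Real.sin_two_mul]; ring : Real.sin (2*θ) = 2*Real.cos θ*Real.sin θ)
    have hDk : kD (Real.cos θ : ℂ) (Real.sin θ : ℂ) (Real.cosh (x + 2*Real.cot (2*θ)*t) : ℂ) (Real.sinh (x + 2*Real.cot (2*θ)*t) : ℂ) ≠ 0 := by rw [← hbD]; exact hdcU
    have hkey := key (Real.cos θ : ℂ) (Real.sin θ : ℂ) (Real.cosh (x + 2*Real.cot (2*θ)*t) : ℂ) (Real.sinh (x + 2*Real.cot (2*θ)*t) : ℂ) ((Real.cot (2*θ) : ℝ) : ℂ) ((Real.sin (2*θ) : ℝ) : ℂ)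
      hσc hDk h1c h2c hksc hs2c
    simp only [g0, g1, g2]
    rw [hbM, hbM2, hbD, hbD']
    simp only [cN, cκ]
    rw [show ((2*Real.cot (2*θ) : ℝ) : ℂ) = 2*((Real.cot (2*θ):ℝ):ℂ) from by push_cast; ring]
    linear_combination (Complex.exp (Complex.I * (t:ℂ) / (Real.sin (2*θ):ℂ)^2) * (c1 θ * cE θ (x + 2*Real.cot (2*θ)*t))) * hkey
      + (Complex.exp (Complex.I * (t:ℂ) / (Real.sin (2*θ):ℂ)^2) * (c1 θ * cE θ (x + 2*Real.cot (2*θ)*t)) * (kN (Real.cos θ : ℂ) (Real.sin θ : ℂ) (Real.cosh (x + 2*Real.cot (2*θ)*t) : ℂ) (Real.sinh (x + 2*Real.cot (2*θ)*t) : ℂ))^3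
          / (((Real.sin (2*θ) : ℝ):ℂ)^2 * (kD (Real.cos θ : ℂ) (Real.sin θ : ℂ) (Real.cosh (x + 2*Real.cot (2*θ)*t) : ℂ) (Real.sinh (x + 2*Real.cot (2*θ)*t) : ℂ))^2)) * Complex.I_sq
end
end

section
/- Fix θ ∈ (0, π/2) and define q₀ : ℝ → ℂ by q₀(x) := √(2 sin(2θ)) · (cos θ · cosh x − i sin θ · sinh x)³ / (cos²θ · cosh²x + sin²θ · sinh²x)² · e^{−i x · cot(2θ)}. Then ∫_ℝ |q₀(x)|² dx = 8θ. Equivalently, ∫_ℝ 2 sin(2θ) / (cos²θ · cosh²x + sin²θ · sinh²x) dx = 8θ. -/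
/-!
Since `|cos θ cosh x - i sin θ sinh x|² = cos²θ cosh²x + sin²θ sinh²x =: D(x)` and the phase has
modulus one, `|q₀|² = 2 sin 2θ / D`, so both integrals coincide. Dividing numerator and denominator
by `cos²θ cosh²x` gives `2 sin 2θ / D = 4 a / (cosh²x + a² sinh²x)` with `a = tan θ`, whose
antiderivative is `4 arctan (a tanh x)`; the integrand is even, hence the integral is
`8 arctan (tan θ) = 8θ`.
-/

open MeasureTheory Real Filter Topology Set

namespace Real

theorem hasDerivAt_tanh (x : ℝ) : HasDerivAt tanh (1 / cosh x ^ 2) x := by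
  have h := (hasDerivAt_sinh x).div (hasDerivAt_cosh x) (cosh_pos x).ne'
  rw [show tanh = fun y => sinh y / cosh y from funext tanh_eq_sinh_div_cosh]
  refine h.congr_deriv ?_
  rw [← cosh_sq_sub_sinh_sq x]
  ring

theorem tanh_eq_one_sub_two_div (x : ℝ) : tanh x = 1 - 2 / (exp (2 * x) + 1) := by
  have hexp : exp (2 * x) = exp x * exp x := by rw [two_mul, exp_add]
  rw [tanh_eq_sinh_div_cosh, sinh_eq, cosh_eq, exp_neg, hexp]
  have := exp_pos x
  field_simp
  ring

theorem tendsto_tanh_atTop : Tendsto tanh atTop (𝓝 1) := by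
  have hexp : Tendsto (fun x => exp (2 * x) + 1) atTop atTop :=
    tendsto_atTop_add_const_right _ _
      (tendsto_exp_atTop.comp (tendsto_id.const_mul_atTop two_pos))
  rw [show tanh = fun x => 1 - 2 / (exp (2 * x) + 1) from funext tanh_eq_one_sub_two_div]
  simpa using (tendsto_const_nhds (x := (1 : ℝ))).sub (hexp.const_div_atTop 2)

end Real

theorem hasDerivAt_arctan_mul_tanh (a x : ℝ) :
    HasDerivAt (fun y => arctan (a * tanh y)) (a / (cosh x ^ 2 + a ^ 2 * sinh x ^ 2)) x := by
  refine (((hasDerivAt_tanh x).const_mul a).arctan).congr_deriv ?_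
  have := cosh_pos x
  rw [tanh_eq_sinh_div_cosh]
  field_simp

theorem integral_div_cosh_sq_add_mul_sinh_sq {a : ℝ} (ha : 0 ≤ a) :
    ∫ x, a / (cosh x ^ 2 + a ^ 2 * sinh x ^ 2) = 2 * arctan a := by
  set f : ℝ → ℝ := fun x => a / (cosh x ^ 2 + a ^ 2 * sinh x ^ 2)
  have heven (x : ℝ) : f |x| = f x := by
    simp only [f, cosh_abs, ← abs_sinh, sq_abs]
  have hlim : Tendsto (fun y => arctan (a * tanh y)) atTop (𝓝 (arctan a)) := by
    have := (continuous_arctan.tendsto _).comp (tendsto_tanh_atTop.const_mul a)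
    rwa [mul_one] at this
  calc ∫ x, f x = ∫ x, f |x| := by simp_rw [heven]
    _ = 2 * ∫ x in Ioi 0, f x := integral_comp_abs
    _ = 2 * (arctan a - arctan (a * tanh 0)) := by
      rw [integral_Ioi_of_hasDerivAt_of_nonneg' (fun x _ => hasDerivAt_arctan_mul_tanh a x)
        (fun x _ => by positivity) hlim]
    _ = 2 * arctan a := by simp

theorem integral_two_sin_two_mul_div {θ : ℝ} (hθ : θ ∈ Ioo 0 (π / 2)) :
    ∫ x, 2 * sin (2 * θ) / (cos θ ^ 2 * cosh x ^ 2 + sin θ ^ 2 * sinh x ^ 2) = 8 * θ := by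
  have hcos : 0 < cos θ := cos_pos_of_mem_Ioo ⟨by linarith [hθ.1, pi_pos], hθ.2⟩
  have htan : 0 ≤ tan θ := (tan_pos_of_pos_of_lt_pi_div_two hθ.1 hθ.2).le
  have hrescale (x : ℝ) :
      2 * sin (2 * θ) / (cos θ ^ 2 * cosh x ^ 2 + sin θ ^ 2 * sinh x ^ 2)
        = 4 * (tan θ / (cosh x ^ 2 + tan θ ^ 2 * sinh x ^ 2)) := by
    have := cosh_pos x
    rw [sin_two_mul, tan_eq_sin_div_cos]
    field_simp
    ring
  simp_rw [hrescale]
  rw [integral_const_mul, integral_div_cosh_sq_add_mul_sinh_sq htan,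
    arctan_tan (by linarith [hθ.1, pi_pos]) hθ.2]
  ring

theorem norm_sq_ofReal_sub_I_mul (a b : ℝ) : ‖(a : ℂ) - Complex.I * b‖ ^ 2 = a ^ 2 + b ^ 2 := by
  rw [Complex.sq_norm, show (a : ℂ) - Complex.I * b = a + (-b : ℝ) * Complex.I by push_cast; ring,
    Complex.normSq_add_mul_I, neg_sq]

theorem norm_sq_sqrt_mul_pow_three_div_sq_mul {A D : ℝ} (hA : 0 ≤ A) {w z : ℂ}
    (hw : ‖w‖ ^ 2 = D) (hz : ‖z‖ = 1) :
    ‖(√A : ℂ) * w ^ 3 / (D : ℂ) ^ 2 * z‖ ^ 2 = A / D := by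
  subst hw
  rw [norm_mul, hz, mul_one, norm_div, norm_mul, norm_pow, norm_pow, Complex.norm_real,
    Complex.norm_real, norm_of_nonneg (sqrt_nonneg A), norm_of_nonneg (by positivity)]
  rcases eq_or_ne ‖w‖ 0 with hw0 | hw0
  · simp [hw0]
  · field_simp
    rw [sq_sqrt hA]

/-- **Mass of the DNLS soliton.** For `θ ∈ (0, π/2)`, the soliton profile
`q₀` satisfies `∫ |q₀|² = 8θ`; equivalently
`∫ 2 sin(2θ)/(cos²θ cosh²x + sin²θ sinh²x) dx = 8θ`. -/
theorem stmt_6 (θ : ℝ) (hθ : θ ∈ Set.Ioo 0 (Real.pi / 2)) :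
    let q₀ : ℝ → ℂ := fun x =>
      (Real.sqrt (2 * Real.sin (2 * θ)) : ℂ)
        * ((Real.cos θ : ℂ) * (Real.cosh x : ℂ)
            - Complex.I * (Real.sin θ : ℂ) * (Real.sinh x : ℂ)) ^ 3
        / ((Real.cos θ ^ 2 * Real.cosh x ^ 2 + Real.sin θ ^ 2 * Real.sinh x ^ 2 : ℝ) : ℂ) ^ 2
        * Complex.exp (-(Complex.I * (x : ℂ) * (Real.cot (2 * θ) : ℂ)))
    (∫ x : ℝ, ‖q₀ x‖ ^ 2) = 8 * θ ∧
    (∫ x : ℝ,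
        2 * Real.sin (2 * θ)
          / (Real.cos θ ^ 2 * Real.cosh x ^ 2 + Real.sin θ ^ 2 * Real.sinh x ^ 2)) = 8 * θ := by
  intro q₀
  have hsin : 0 ≤ 2 * sin (2 * θ) :=
    mul_nonneg two_pos.le (sin_nonneg_of_nonneg_of_le_pi (by linarith [hθ.1]) (by linarith [hθ.2]))
  have hq₀ (x : ℝ) :
      ‖q₀ x‖ ^ 2 = 2 * sin (2 * θ) / (cos θ ^ 2 * cosh x ^ 2 + sin θ ^ 2 * sinh x ^ 2) := by
    refine norm_sq_sqrt_mul_pow_three_div_sq_mul hsin ?_ ?_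
    · simpa [mul_assoc, mul_pow] using norm_sq_ofReal_sub_I_mul (cos θ * cosh x) (sin θ * sinh x)
    · rw [show -(Complex.I * x * cot (2 * θ)) = (-(x * cot (2 * θ)) : ℝ) * Complex.I by
        push_cast; ring]
      exact Complex.norm_exp_ofReal_mul_I _
  simp_rw [hq₀]
  exact ⟨integral_two_sin_two_mul_div hθ, integral_two_sin_two_mul_div hθ⟩
end

section
/- For every θ ∈ (0, π/2) and every ξ ∈ ℝ, the (absolutely convergent) integral identity ∫_ℝ cosh(x − iθ)/cosh²(x + iθ) · e^{−i ξ x} dx = π e^{−θ ξ} / cosh(π ξ / 2) · ( cos(2θ) − ξ sin(2θ) ) holds, where cosh(x ± iθ) = cos θ · cosh x ± i sin θ · sinh x denotes the complex hyperbolic cosine. -/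
/-!
Since `cosh (x - iθ) = cos 2θ · cosh (x + iθ) - i sin 2θ · sinh (x + iθ)`, the integrand splits as
`cos 2θ · e^{-iξx} / cosh (x + iθ) - i sin 2θ · sinh (x + iθ) / cosh² (x + iθ) · e^{-iξx}`, and an
integration by parts (`sinh / cosh²` is the derivative of `-1 / cosh`) turns the second integral
into `-iξ` times the first. As `cosh` has no zeros in the strip `|Im z| < π/2` and decays like
`1 / cosh (Re z)` there, Cauchy's theorem moves the line of integration from `ℝ + iθ` to `ℝ`,
at the cost of a factor `e^{-θξ}`. Finally the substitution `t = sigmoid x` turns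
`∫ e^{ax} / cosh x dx` into the beta integral `B((1+a)/2, (1-a)/2) = π / cos (πa/2)`, which is
`π / cosh (πξ/2)` at `a = -iξ`.
-/

open MeasureTheory Filter Set Complex
open scoped Topology Interval Real

namespace Real

lemma one_add_sq_div_two_le_cosh (x : ℝ) : 1 + x ^ 2 / 2 ≤ cosh x := by
  have hsinh : |x / 2| ≤ |sinh (x / 2)| := by
    rw [abs_sinh]; exact self_le_sinh_iff.2 (abs_nonneg _)
  have hsq : (x / 2) ^ 2 ≤ sinh (x / 2) ^ 2 := sq_le_sq.2 hsinh
  have hcosh : cosh x = 1 + 2 * sinh (x / 2) ^ 2 := by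
    have h := cosh_two_mul (x / 2)
    rw [mul_div_cancel₀ x two_ne_zero, cosh_sq] at h
    linarith
  nlinarith

lemma integrable_inv_cosh : Integrable fun x : ℝ ↦ (cosh x)⁻¹ := by
  refine (integrable_inv_one_add_sq.const_mul 2).mono'
    (continuous_cosh.inv₀ fun x ↦ (cosh_pos x).ne').aestronglyMeasurable (ae_of_all _ fun x ↦ ?_)
  rw [norm_inv, norm_of_nonneg (cosh_pos x).le, ← div_eq_mul_inv,
    le_div_iff₀ (by positivity), inv_mul_eq_div, div_le_iff₀ (cosh_pos x)]
  linarith [one_add_sq_div_two_le_cosh x]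

lemma tendsto_inv_cosh_cocompact : Tendsto (fun x : ℝ ↦ (cosh x)⁻¹) (cocompact ℝ) (𝓝 0) := by
  refine (tendsto_atTop_mono (fun x ↦ ?_) tendsto_norm_cocompact_atTop).inv_tendsto_atTop
  rw [norm_eq_abs]
  nlinarith [one_add_sq_div_two_le_cosh x, sq_abs x, sq_nonneg (|x| - 1)]

end Real

namespace Complex

lemma normSq_cosh_add_mul_I (x y : ℝ) :
    normSq (cosh (x + y * I)) = Real.sinh x ^ 2 + Real.cos y ^ 2 := by
  rw [cosh_add, cosh_mul_I, sinh_mul_I, ← ofReal_cosh, ← ofReal_sinh, ← ofReal_cos, ← ofReal_sin,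
    ← mul_assoc, ← ofReal_mul, ← ofReal_mul, normSq_add_mul_I]
  nlinarith [Real.cosh_sq x, Real.sin_sq_add_cos_sq y]

lemma normSq_sinh_add_mul_I (x y : ℝ) :
    normSq (sinh (x + y * I)) = Real.sinh x ^ 2 + Real.sin y ^ 2 := by
  rw [sinh_add, cosh_mul_I, sinh_mul_I, ← ofReal_cosh, ← ofReal_sinh, ← ofReal_cos, ← ofReal_sin,
    ← mul_assoc, ← ofReal_mul, ← ofReal_mul, normSq_add_mul_I]
  nlinarith [Real.cosh_sq x, Real.sin_sq_add_cos_sq y]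

lemma cos_mul_cosh_le_norm_cosh_add_mul_I (x y : ℝ) :
    Real.cos y * Real.cosh x ≤ ‖cosh (x + y * I)‖ := by
  rw [norm_def, normSq_cosh_add_mul_I]
  refine Real.le_sqrt_of_sq_le ?_
  nlinarith [Real.cosh_sq x, Real.cos_sq_le_one y, sq_nonneg (Real.sinh x)]

lemma norm_sinh_add_mul_I_le (x y : ℝ) : ‖sinh (x + y * I)‖ ≤ Real.cosh x := by
  rw [norm_def, normSq_sinh_add_mul_I]
  refine Real.sqrt_le_iff.2 ⟨(Real.cosh_pos x).le, ?_⟩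
  nlinarith [Real.cosh_sq x, Real.sin_sq_le_one y]

lemma cosh_add_mul_I_ne_zero {y : ℝ} (hy : 0 < Real.cos y) (x : ℝ) : cosh (x + y * I) ≠ 0 :=
  norm_pos_iff.1 <|
    (mul_pos hy (Real.cosh_pos x)).trans_le (cos_mul_cosh_le_norm_cosh_add_mul_I x y)

lemma cosh_sub_mul_I (z w : ℂ) : cosh (z - w * I) = cos w * cosh z - I * sin w * sinh z := by
  rw [cosh_sub, cosh_mul_I, sinh_mul_I]; ring

lemma norm_cexp_neg_I_mul (ξ x : ℝ) : ‖cexp (-(I * ξ * x))‖ = 1 := by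
  simp [norm_exp]

end Complex

lemma Real.sigmoid_eq_exp_div_cosh (x : ℝ) :
    Real.sigmoid x = Real.exp (x / 2) / (2 * Real.cosh (x / 2)) := by
  have h : Real.exp (-x) = Real.exp (-(x / 2)) / Real.exp (x / 2) := by
    rw [← Real.exp_sub]; ring_nf
  rw [Real.sigmoid_def, Real.cosh_eq, h]
  field_simp

lemma Real.log_sigmoid (x : ℝ) :
    Real.log (Real.sigmoid x) = x / 2 - Real.log (2 * Real.cosh (x / 2)) := by
  rw [Real.sigmoid_eq_exp_div_cosh, Real.log_div (Real.exp_pos _).ne'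
    (by positivity [Real.cosh_pos (x / 2)]), Real.log_exp]

lemma Complex.betaIntegral_eq_integral_sigmoid (u v : ℂ) :
    betaIntegral u v = ∫ x : ℝ, (Real.sigmoid x : ℂ) ^ u * (Real.sigmoid (-x) : ℂ) ^ v := by
  rw [betaIntegral, intervalIntegral.integral_of_le zero_le_one, integral_Ioc_eq_integral_Ioo,
    ← Real.range_sigmoid, ← image_univ,
    integral_image_eq_integral_abs_deriv_smul MeasurableSet.univ
      (fun x _ ↦ (Real.hasDerivAt_sigmoid x).hasDerivWithinAt) Real.sigmoid_injective.injOn,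
    setIntegral_univ]
  congr 1 with x
  have hσ : (Real.sigmoid x : ℂ) ≠ 0 := ofReal_ne_zero.2 (Real.sigmoid_pos x).ne'
  have hσ' : (Real.sigmoid (-x) : ℂ) ≠ 0 := ofReal_ne_zero.2 (Real.sigmoid_pos (-x)).ne'
  have hone_sub : (1 : ℂ) - Real.sigmoid x = Real.sigmoid (-x) := by
    rw [Real.sigmoid_neg]; push_cast; ring
  rw [hone_sub, ← Real.sigmoid_neg,
    abs_of_pos (mul_pos (Real.sigmoid_pos x) (Real.sigmoid_pos (-x))), real_smul,
    cpow_sub _ _ hσ, cpow_sub _ _ hσ', cpow_one, cpow_one]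
  push_cast
  field_simp

lemma integral_cexp_mul_div_cosh {a : ℂ} (ha : |a.re| < 1) :
    ∫ x : ℝ, cexp (a * x) / Real.cosh x = π / cos (π * a / 2) := by
  set u := (1 + a) / 2 with hu_def
  have hu : 0 < u.re := by simp [hu_def]; linarith [(abs_lt.1 ha).1]
  have hv : 0 < (1 - u).re := by simp [hu_def]; linarith [(abs_lt.1 ha).2]
  have hβ : betaIntegral u (1 - u) = π / cos (π * a / 2) := by
    have := Gamma_mul_Gamma_eq_betaIntegral hu hv
    rw [add_sub_cancel, Gamma_one, one_mul, Gamma_mul_Gamma_one_sub] at this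
    rw [← this, hu_def, show (π : ℂ) * ((1 + a) / 2) = π * a / 2 + π / 2 by ring,
      sin_add_pi_div_two]
  have hintegrand (x : ℝ) : (Real.sigmoid x : ℂ) ^ u * (Real.sigmoid (-x) : ℂ) ^ (1 - u)
      = cexp (a * (x / 2 : ℝ)) / Real.cosh (x / 2 : ℝ) / 2 := by
    have hc : 0 < 2 * Real.cosh (x / 2) := by positivity [Real.cosh_pos (x / 2)]
    rw [cpow_def_of_ne_zero (ofReal_ne_zero.2 (Real.sigmoid_pos x).ne'),
      cpow_def_of_ne_zero (ofReal_ne_zero.2 (Real.sigmoid_pos (-x)).ne'), ← exp_add,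
      ← ofReal_log (Real.sigmoid_pos x).le, ← ofReal_log (Real.sigmoid_pos (-x)).le,
      Real.log_sigmoid, Real.log_sigmoid, neg_div, Real.cosh_neg]
    have hL : cexp (Real.log (2 * Real.cosh (x / 2))) = 2 * Real.cosh (x / 2) := by
      rw [← ofReal_exp, Real.exp_log hc]; push_cast; rfl
    rw [div_div, mul_comm _ (2 : ℂ), ← hL, ← exp_sub]
    congr 1
    rw [hu_def]
    push_cast
    ring
  have hscale := Measure.integral_comp_mul_left (fun y : ℝ ↦ cexp (a * y) / Real.cosh y) 2⁻¹
  simp only [inv_inv, abs_two] at hscale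
  rw [← hβ, betaIntegral_eq_integral_sigmoid]
  simp_rw [hintegrand, div_eq_inv_mul (_ : ℝ) 2]
  rw [integral_div, hscale]
  simp

theorem integral_add_mul_I_eq_integral {E : Type*} [NormedAddCommGroup E] [NormedSpace ℂ E]
    [CompleteSpace E] {f : ℂ → E} {c : ℝ} (hf : DifferentiableOn ℂ f (im ⁻¹' [[0, c]]))
    {g : ℝ → ℝ} (hg : Tendsto g (cocompact ℝ) (𝓝 0))
    (hfg : ∀ x : ℝ, ∀ y ∈ [[0, c]], ‖f (x + y * I)‖ ≤ g x)
    (hf₀ : Integrable fun x : ℝ ↦ f x) (hf_c : Integrable fun x : ℝ ↦ f (x + c * I)) :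
    ∫ x : ℝ, f (x + c * I) = ∫ x : ℝ, f x := by
  have hrect (T : ℝ) : (∫ x in -T..T, f x) - (∫ x in -T..T, f (x + c * I)) +
      (I • (∫ y in 0..c, f (T + y * I)) - I • (∫ y in 0..c, f (-T + y * I))) = 0 := by
    have := integral_boundary_rect_eq_zero_of_differentiableOn f (-T : ℝ) (T + c * I)
      (hf.mono fun z hz ↦ by simpa using hz.2)
    simpa [add_sub_assoc] using this
  have hvertical {l : Filter ℝ} {s : ℝ → ℝ} (hs : Tendsto s l (cocompact ℝ)) :
      Tendsto (fun T ↦ ∫ y in 0..c, f (s T + y * I)) l (𝓝 0) := by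
    refine squeeze_zero_norm (fun T ↦ intervalIntegral.norm_integral_le_of_norm_le_const
      fun y hy ↦ hfg (s T) y (uIoc_subset_uIcc hy)) ?_
    simpa using ((hg.comp hs).mul_const |c - 0|)
  have hlim := ((intervalIntegral_tendsto_integral hf₀ tendsto_neg_atTop_atBot tendsto_id).sub
    (intervalIntegral_tendsto_integral hf_c tendsto_neg_atTop_atBot tendsto_id)).add
    (((hvertical atTop_le_cocompact).const_smul I).sub
      ((hvertical (tendsto_neg_atTop_atBot.mono_right atBot_le_cocompact)).const_smul I))
  rw [smul_zero, sub_zero, add_zero] at hlim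
  exact (sub_eq_zero.1 (tendsto_nhds_unique hlim (by simp [hrect]))).symm

section FourierSech

variable {θ : ℝ}

lemma integrable_cexp_div_cosh_add_mul_I (hθ : 0 < Real.cos θ) (ξ : ℝ) :
    Integrable fun x : ℝ ↦ cexp (-(I * ξ * x)) / cosh (x + θ * I) := by
  refine (Real.integrable_inv_cosh.const_mul (Real.cos θ)⁻¹).mono'
    (Continuous.div (by fun_prop) (by fun_prop) (cosh_add_mul_I_ne_zero hθ)).aestronglyMeasurable
    (ae_of_all _ fun x ↦ ?_)
  rw [norm_div, norm_cexp_neg_I_mul, one_div, ← mul_inv]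
  exact inv_anti₀ (by positivity [Real.cosh_pos x]) (cos_mul_cosh_le_norm_cosh_add_mul_I x θ)

lemma integrable_sinh_div_cosh_sq_mul_cexp (hθ : 0 < Real.cos θ) (ξ : ℝ) :
    Integrable fun x : ℝ ↦ sinh (x + θ * I) / cosh (x + θ * I) ^ 2 * cexp (-(I * ξ * x)) := by
  refine (Real.integrable_inv_cosh.const_mul (Real.cos θ ^ 2)⁻¹).mono' ?_
    (ae_of_all _ fun x ↦ ?_)
  · exact (Continuous.div (by fun_prop) (by fun_prop)
      fun x ↦ pow_ne_zero 2 (cosh_add_mul_I_ne_zero hθ x)).aestronglyMeasurable.mul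
      (by fun_prop)
  have hc := Real.cosh_pos x
  calc ‖sinh (x + θ * I) / cosh (x + θ * I) ^ 2 * cexp (-(I * ξ * x))‖
      = ‖sinh (x + θ * I)‖ / ‖cosh (x + θ * I)‖ ^ 2 := by
        rw [norm_mul, norm_cexp_neg_I_mul, mul_one, norm_div, norm_pow]
    _ ≤ Real.cosh x / (Real.cos θ * Real.cosh x) ^ 2 :=
        div_le_div₀ hc.le (norm_sinh_add_mul_I_le x θ) (by positivity)
          (pow_le_pow_left₀ (by positivity) (cos_mul_cosh_le_norm_cosh_add_mul_I x θ) 2)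
    _ = (Real.cos θ ^ 2)⁻¹ * (Real.cosh x)⁻¹ := by field_simp

lemma integral_cexp_neg_I_mul_div_cosh (ξ : ℝ) :
    ∫ x : ℝ, cexp (-(I * ξ * x)) / cosh x = π / Real.cosh (π * ξ / 2) := by
  have hcos_I : cos (π * -(I * ξ) / 2) = Real.cosh (π * ξ / 2) := by
    rw [show (π : ℂ) * -(I * ξ) / 2 = -((π * ξ / 2 : ℝ) * I) by push_cast; ring, cos_neg,
      cos_mul_I, ofReal_cosh]
  rw [← hcos_I, ← integral_cexp_mul_div_cosh (by simp)]
  simp [neg_mul]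

lemma norm_cexp_div_cosh_add_mul_I_le (hθ : |θ| < π / 2) {y : ℝ} (hy : y ∈ [[0, θ]]) (ξ x : ℝ) :
    ‖cexp (-(I * ξ * (x + y * I))) / cosh (x + y * I)‖
      ≤ Real.exp (|ξ| * |θ|) * ((Real.cos θ)⁻¹ * (Real.cosh x)⁻¹) := by
  have hy' : |y| ≤ |θ| := by simpa using abs_sub_left_of_mem_uIcc hy
  have hnum : ‖cexp (-(I * ξ * (x + y * I)))‖ ≤ Real.exp (|ξ| * |θ|) := by
    rw [norm_exp, Real.exp_le_exp]
    simpa [abs_mul] using (le_abs_self (ξ * y)).trans (by rw [abs_mul]; gcongr)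
  have hcos : Real.cos θ ≤ Real.cos y := by
    rw [← Real.cos_abs θ, ← Real.cos_abs y]
    exact Real.cos_le_cos_of_nonneg_of_le_pi (abs_nonneg y) (by linarith [Real.pi_pos]) hy'
  have hden : Real.cos θ * Real.cosh x ≤ ‖cosh (x + y * I)‖ :=
    (mul_le_mul_of_nonneg_right hcos (Real.cosh_pos x).le).trans
      (cos_mul_cosh_le_norm_cosh_add_mul_I x y)
  have hcosθ : 0 < Real.cos θ := Real.cos_pos_of_mem_Ioo (abs_lt.1 hθ)
  rw [norm_div, ← mul_inv, div_eq_mul_inv]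
  exact mul_le_mul hnum (inv_anti₀ (by positivity [Real.cosh_pos x]) hden) (by positivity)
    (by positivity)

lemma integral_cexp_div_cosh_add_mul_I (hθ : |θ| < π / 2) (ξ : ℝ) :
    ∫ x : ℝ, cexp (-(I * ξ * x)) / cosh (x + θ * I)
      = (Real.exp (-(θ * ξ)) * π / Real.cosh (π * ξ / 2) : ℝ) := by
  have hcos : 0 < Real.cos θ := Real.cos_pos_of_mem_Ioo (abs_lt.1 hθ)
  set f : ℂ → ℂ := fun z ↦ cexp (-(I * ξ * z)) / cosh z with hf_def
  have hshift (x : ℝ) :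
      f (x + θ * I) = Real.exp (ξ * θ) * (cexp (-(I * ξ * x)) / cosh (x + θ * I)) := by
    simp only [hf_def]
    rw [ofReal_exp, ← mul_div_assoc, ← exp_add]
    congr 2
    push_cast
    linear_combination (-(ξ : ℂ) * θ) * I_sq
  have hdiff : DifferentiableOn ℂ f (im ⁻¹' [[0, θ]]) := fun z hz ↦ by
    have hz' : cosh z ≠ 0 := by
      have him : |z.im| < π / 2 :=
        (show |z.im| ≤ |θ| by simpa using abs_sub_left_of_mem_uIcc hz).trans_lt hθ
      simpa using cosh_add_mul_I_ne_zero (Real.cos_pos_of_mem_Ioo (abs_lt.1 him)) z.re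
    exact (DifferentiableAt.div (by fun_prop) (by fun_prop) hz').differentiableWithinAt
  have hdecay : Tendsto (fun x ↦ Real.exp (|ξ| * |θ|) * ((Real.cos θ)⁻¹ * (Real.cosh x)⁻¹))
      (cocompact ℝ) (𝓝 0) := by
    simpa only [mul_zero] using
      (Real.tendsto_inv_cosh_cocompact.const_mul _).const_mul (Real.exp (|ξ| * |θ|))
  have hint₀ : Integrable fun x : ℝ ↦ f x := by
    simpa using integrable_cexp_div_cosh_add_mul_I (θ := 0) (by simp) ξ
  have hintθ : Integrable fun x : ℝ ↦ f (x + θ * I) := by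
    simpa only [hshift] using (integrable_cexp_div_cosh_add_mul_I hcos ξ).const_mul _
  have hcontour := integral_add_mul_I_eq_integral hdiff hdecay
    (fun x y hy ↦ norm_cexp_div_cosh_add_mul_I_le hθ hy ξ x) hint₀ hintθ
  rw [integral_congr_ae (ae_of_all _ hshift), integral_const_mul,
    integral_cexp_neg_I_mul_div_cosh,
    ← eq_inv_mul_iff_mul_eq₀ (ofReal_ne_zero.2 (Real.exp_pos _).ne')] at hcontour
  rw [hcontour, ← ofReal_inv, ← Real.exp_neg]
  push_cast
  ring_nf

lemma integral_sinh_div_cosh_sq_mul_cexp (hθ : 0 < Real.cos θ) (ξ : ℝ) :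
    ∫ x : ℝ, sinh (x + θ * I) / cosh (x + θ * I) ^ 2 * cexp (-(I * ξ * x))
      = -(I * ξ) * ∫ x : ℝ, cexp (-(I * ξ * x)) / cosh (x + θ * I) := by
  have hderiv (x : ℝ) : HasDerivAt (fun x : ℝ ↦ cexp (-(I * ξ * x)) / cosh (x + θ * I))
      (-(I * ξ) * (cexp (-(I * ξ * x)) / cosh (x + θ * I))
        - sinh (x + θ * I) / cosh (x + θ * I) ^ 2 * cexp (-(I * ξ * x))) x := by
    have hc := cosh_add_mul_I_ne_zero hθ x
    have hz : HasDerivAt (fun z : ℂ ↦ cexp (-(I * ξ * z)) / cosh (z + θ * I))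
        (-(I * ξ) * (cexp (-(I * ξ * x)) / cosh (x + θ * I))
          - sinh (x + θ * I) / cosh (x + θ * I) ^ 2 * cexp (-(I * ξ * x))) x := by
      refine ((((hasDerivAt_id (x : ℂ)).const_mul (I * ξ)).neg.cexp).div ((hasDerivAt_cosh _).comp _
        ((hasDerivAt_id (x : ℂ)).add_const (θ * I))) hc).congr_deriv ?_
      simp only [id, mul_one, Function.comp_apply, Pi.neg_apply]
      field_simp
    exact hz.comp_ofReal
  have hint := integrable_cexp_div_cosh_add_mul_I hθ ξ
  have h := integral_eq_zero_of_hasDerivAt_of_integrable hderiv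
    ((hint.const_mul _).sub (integrable_sinh_div_cosh_sq_mul_cexp hθ ξ)) hint
  rw [integral_sub (hint.const_mul _) (integrable_sinh_div_cosh_sq_mul_cexp hθ ξ),
    integral_const_mul, sub_eq_zero] at h
  exact h.symm

end FourierSech

/-- **Fourier transform of the soliton profile.** For `θ ∈ (0, π/2)` and `ξ ∈ ℝ`,
`∫ cosh(x - iθ)/cosh²(x + iθ) e^{-iξx} dx
  = π e^{-θξ}/cosh(πξ/2) (cos 2θ - ξ sin 2θ)`. -/
theorem stmt_7 (θ ξ : ℝ) (hθ : θ ∈ Set.Ioo 0 (Real.pi / 2)) :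
    (∫ x : ℝ,
        Complex.cosh ((x : ℂ) - Complex.I * (θ : ℂ))
          / (Complex.cosh ((x : ℂ) + Complex.I * (θ : ℂ))) ^ 2
          * Complex.exp (-(Complex.I * (ξ : ℂ) * (x : ℂ))))
      = ((Real.pi * Real.exp (-(θ * ξ)) / Real.cosh (Real.pi * ξ / 2)
            * (Real.cos (2 * θ) - ξ * Real.sin (2 * θ)) : ℝ) : ℂ) := by
  have hθ' : |θ| < π / 2 := abs_lt.2 ⟨by linarith [hθ.1, Real.pi_pos], hθ.2⟩
  have hcos : 0 < Real.cos θ := Real.cos_pos_of_mem_Ioo (abs_lt.1 hθ')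
  have hsplit (x : ℝ) :
      cosh (x - I * θ) / cosh (x + I * θ) ^ 2 * cexp (-(I * ξ * x))
        = Real.cos (2 * θ) * (cexp (-(I * ξ * x)) / cosh (x + θ * I))
          - Real.sin (2 * θ) * I
            * (sinh (x + θ * I) / cosh (x + θ * I) ^ 2 * cexp (-(I * ξ * x))) := by
    have hc := cosh_add_mul_I_ne_zero hcos x
    rw [mul_comm I (θ : ℂ), show (x : ℂ) - θ * I = x + θ * I - (2 * θ : ℝ) * I by push_cast; ring,
      cosh_sub_mul_I, ← ofReal_cos, ← ofReal_sin]
    field_simp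
  rw [integral_congr_ae (ae_of_all _ hsplit),
    integral_sub ((integrable_cexp_div_cosh_add_mul_I hcos ξ).const_mul _)
      ((integrable_sinh_div_cosh_sq_mul_cexp hcos ξ).const_mul _),
    integral_const_mul, integral_const_mul, integral_sinh_div_cosh_sq_mul_cexp hcos,
    integral_cexp_div_cosh_add_mul_I hθ']
  push_cast
  linear_combination sin (2 * θ) * ξ * (cexp (-(θ * ξ)) * π / cosh (π * ξ / 2)) * I_sq
end

section
/- There exist absolute constants 0 < c ≤ C such that for every κ > 0 and every measurable f : ℝ → ℂ one has c ∫_ℝ log(4 + ξ²/κ²) · (4κ² + ξ²)^{−1/2} |f(ξ)|² dξ ≤ ∬_{ℝ×ℝ} |f(ξ − η)|² (κ² + ξ²)^{−1/2} (κ² + η²)^{−1/2} dξ dη ≤ C ∫_ℝ log(4 + ξ²/κ²) · (4κ² + ξ²)^{−1/2} |f(ξ)|² dξ, and moreover ∫_ℝ log(4 + ξ²/κ²) · (4κ² + ξ²)^{−1/2} |f(ξ)|² dξ ≤ C κ^{−1} ∫_ℝ |f(ξ)|² dξ. -/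
/-!
Write `⟨x⟩ = √(κ² + x²)`, which is comparable to `κ + |x|` up to a factor `2`. The shear
`(σ, η) ↦ (σ + η, η)` and Tonelli turn the double integral into `∫ |f σ|² G(σ) dσ` with
`G(σ) = ∫ dη / (⟨σ + η⟩ ⟨η⟩)`, so everything reduces to `G(σ) ≍ log(4 + σ²/κ²) / √(4κ² + σ²)`.
For the lower bound restrict to `0 < η ≤ κ + |σ|`, where `⟨σ + η⟩ ≲ κ + |σ|`, and get a logarithm.
For the upper bound note that the larger of `|σ + η|` and `|η|` is at least `|σ|/2` and at least
the smaller one, so the integrand is dominated by the kernel `1 / ((κ + max(t, |σ|/2)) (κ + t))`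
evaluated at `t = |η|` plus at `t = |σ + η|`; integrating it over `t > 0` gives
`(1 + log(1 + |σ|/2κ)) / (κ + |σ|/2)`. The `L²` bound follows from `log y ≤ 2 √y`.
-/

open MeasureTheory Real Set
open scoped ENNReal

theorem lintegral_comp_abs (f : ℝ → ℝ≥0∞) : ∫⁻ x, f |x| = 2 * ∫⁻ x in Ioi 0, f x := by
  have hpos : ∫⁻ x in Ioi 0, f |x| = ∫⁻ x in Ioi 0, f x :=
    setLIntegral_congr_fun measurableSet_Ioi fun x hx => by rw [abs_of_pos hx]
  have hneg : ∫⁻ x in Iic 0, f |x| = ∫⁻ x in Ioi 0, f x := by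
    have h := (Measure.measurePreserving_neg volume).setLIntegral_comp_preimage_emb
      measurableEmbedding_neg (fun x => f |x|) (Ici 0)
    simp only [abs_neg, neg_preimage, neg_Ici, neg_zero] at h
    rw [h, setLIntegral_congr Ioi_ae_eq_Ici.symm, hpos]
  rw [← setLIntegral_univ, ← Iic_union_Ioi (a := (0 : ℝ)),
    lintegral_union measurableSet_Ioi (Iic_disjoint_Ioi le_rfl), hneg, hpos, two_mul]

theorem lintegral_Ioc_div_add {a c T : ℝ} (ha : 0 < a) (hc : 0 ≤ c) (hT : 0 ≤ T) :
    ∫⁻ x in Ioc 0 T, ENNReal.ofReal (c / (a + x)) = ENNReal.ofReal (c * log ((a + T) / a)) := by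
  have hcont : ContinuousOn (fun x : ℝ => c / (a + x)) (Icc 0 T) :=
    continuousOn_const.div (by fun_prop) fun x hx => by linarith [hx.1]
  rw [← ofReal_integral_eq_lintegral_ofReal (hcont.integrableOn_Icc.mono_set Ioc_subset_Icc_self)
    ((ae_restrict_mem measurableSet_Ioc).mono fun x hx => div_nonneg hc (by linarith [hx.1])),
    ← intervalIntegral.integral_of_le hT]
  simp_rw [div_eq_mul_inv c, intervalIntegral.integral_const_mul, add_comm a]
  rw [intervalIntegral.integral_comp_add_right (fun x => x⁻¹) a, zero_add,
    integral_inv_of_pos ha (by linarith), add_comm T]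

theorem lintegral_Ioi_inv_add_sq {a T : ℝ} (h : 0 < a + T) :
    ∫⁻ x in Ioi T, ENNReal.ofReal ((a + x) ^ 2)⁻¹ = ENNReal.ofReal (a + T)⁻¹ := by
  have hderiv : ∀ x ∈ Ici T, HasDerivAt (fun x : ℝ => -(a + x)⁻¹) ((a + x) ^ 2)⁻¹ x := by
    intro x hx
    have hx : a + x ≠ 0 := by linarith [mem_Ici.mp hx]
    simpa [neg_div] using (((hasDerivAt_id' x).const_add a).fun_inv hx).fun_neg
  have hnonneg : ∀ x ∈ Ioi T, 0 ≤ ((a + x) ^ 2)⁻¹ := fun x _ => by positivity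
  have hlim : Filter.Tendsto (fun x : ℝ => -(a + x)⁻¹) Filter.atTop (nhds 0) := by
    simpa using (Filter.tendsto_atTop_add_const_left _ a Filter.tendsto_id).inv_tendsto_atTop.neg
  rw [← ofReal_integral_eq_lintegral_ofReal (integrableOn_Ioi_deriv_of_nonneg' hderiv hnonneg hlim)
    (ae_restrict_of_forall_mem measurableSet_Ioi hnonneg),
    integral_Ioi_of_hasDerivAt_of_nonneg' hderiv hnonneg hlim, zero_sub, neg_neg]

theorem sqrt_sq_add_sq_le_add_abs {a : ℝ} (ha : 0 ≤ a) (x : ℝ) : √(a ^ 2 + x ^ 2) ≤ a + |x| :=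
  (sqrt_le_left (by positivity)).mpr (by nlinarith [sq_abs x, abs_nonneg x])

theorem add_abs_le_two_mul_sqrt {a : ℝ} (ha : 0 ≤ a) (x : ℝ) : a + |x| ≤ 2 * √(a ^ 2 + x ^ 2) := by
  have h : (a + |x|) / 2 ≤ √(a ^ 2 + x ^ 2) :=
    (le_sqrt (by positivity) (by positivity)).mpr (by nlinarith [sq_abs x, sq_nonneg (a - |x|)])
  linarith

theorem inv_sqrt_mul_sqrt_le {a : ℝ} (ha : 0 < a) (x y : ℝ) :
    (√(a ^ 2 + x ^ 2) * √(a ^ 2 + y ^ 2))⁻¹ ≤ 4 * ((a + |x|) * (a + |y|))⁻¹ := by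
  have hx := add_abs_le_two_mul_sqrt ha.le x
  have hy := add_abs_le_two_mul_sqrt ha.le y
  calc (√(a ^ 2 + x ^ 2) * √(a ^ 2 + y ^ 2))⁻¹ ≤ ((a + |x|) / 2 * ((a + |y|) / 2))⁻¹ :=
        inv_anti₀ (by positivity)
          (mul_le_mul (by linarith) (by linarith) (by positivity) (sqrt_nonneg _))
    _ = 4 * ((a + |x|) * (a + |y|))⁻¹ := by rw [div_mul_div_comm, inv_div]; ring

noncomputable def logWeight (a ξ : ℝ) : ℝ := log (4 + ξ ^ 2 / a ^ 2) / √(4 * a ^ 2 + ξ ^ 2)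

theorem logWeight_abs (a ξ : ℝ) : logWeight a |ξ| = logWeight a ξ := by
  simp only [logWeight, sq_abs]

theorem logWeight_le {a : ℝ} (ha : 0 < a) (ξ : ℝ) : logWeight a ξ ≤ 2 / a := by
  set y := 4 + ξ ^ 2 / a ^ 2
  have hy : 0 < y := by positivity
  have hlog : log y ≤ 2 * √y := by
    have h := log_le_rpow_div hy.le (by norm_num : (0 : ℝ) < 1 / 2)
    rwa [← sqrt_eq_rpow, div_eq_mul_inv, inv_div, div_one, mul_comm] at h
  have hsqrt : √(4 * a ^ 2 + ξ ^ 2) = a * √y := by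
    rw [show 4 * a ^ 2 + ξ ^ 2 = a ^ 2 * y by simp only [y]; field_simp,
      sqrt_mul (sq_nonneg a), sqrt_sq ha.le]
  rw [logWeight, hsqrt, div_le_div_iff₀ (by positivity) ha]
  nlinarith [sqrt_pos.mpr hy]

theorem log_four_add_sq_div_sq_le {a s : ℝ} (ha : 0 < a) (hs : 0 ≤ s) :
    log (4 + s ^ 2 / a ^ 2) ≤ 2 * log ((2 * a + s) / a) := by
  rw [show 2 * log ((2 * a + s) / a) = log (((2 * a + s) / a) ^ 2) by simp [log_pow]]
  refine log_le_log (by positivity) ?_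
  rw [div_pow, add_div' _ _ _ (by positivity), div_le_div_iff_of_pos_right (by positivity)]
  nlinarith [mul_nonneg ha.le hs]

theorem logWeight_div_eight_le {a s : ℝ} (ha : 0 < a) (hs : 0 ≤ s) :
    logWeight a s / 8 ≤ (2 * (a + s))⁻¹ * log ((2 * a + s) / a) := by
  have hR : (a + s) / 2 ≤ √(4 * a ^ 2 + s ^ 2) :=
    (le_sqrt (by positivity) (by positivity)).mpr (by nlinarith [mul_nonneg ha.le hs])
  have hL : 0 ≤ log ((2 * a + s) / a) :=
    log_nonneg ((le_div_iff₀ ha).mpr (by linarith))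
  have hX : 0 ≤ log (4 + s ^ 2 / a ^ 2) :=
    log_nonneg (by have := div_nonneg (sq_nonneg s) (sq_nonneg a); linarith)
  calc logWeight a s / 8 ≤ 2 * log ((2 * a + s) / a) / ((a + s) / 2) / 8 := by
        unfold logWeight
        gcongr
        exact log_four_add_sq_div_sq_le ha hs
    _ = (2 * (a + s))⁻¹ * log ((2 * a + s) / a) := by
        field_simp
        ring

theorem one_add_log_div_le_logWeight {a s : ℝ} (ha : 0 < a) (hs : 0 ≤ s) :
    (1 + log ((a + s / 2) / a)) / (a + s / 2) ≤ 4 * logWeight a s := by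
  set X := log (4 + s ^ 2 / a ^ 2)
  have hy : 4 ≤ 4 + s ^ 2 / a ^ 2 := by have := div_nonneg (sq_nonneg s) (sq_nonneg a); linarith
  have hone : 1 ≤ X :=
    (le_log_iff_exp_le (by linarith)).mpr (by linarith [exp_one_lt_d9])
  have hlog : log ((a + s / 2) / a) ≤ X := by
    refine log_le_log (by positivity) ?_
    rw [show (a + s / 2) / a = 1 + s / a / 2 by field_simp, ← div_pow]
    nlinarith [sq_nonneg (s / a - 1 / 4), div_nonneg hs ha.le]
  have hR : √(4 * a ^ 2 + s ^ 2) ≤ 2 * a + s :=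
    (sqrt_le_left (by positivity)).mpr (by nlinarith [mul_nonneg ha.le hs])
  calc (1 + log ((a + s / 2) / a)) / (a + s / 2) ≤ 4 * X / (2 * a + s) := by
        rw [div_le_div_iff₀ (by positivity) (by positivity)]
        nlinarith
    _ ≤ 4 * logWeight a s := by
        rw [logWeight, mul_div_assoc]
        gcongr

noncomputable def kernelMass (a σ : ℝ) : ℝ≥0∞ :=
  ∫⁻ η, ENNReal.ofReal (√(a ^ 2 + (σ + η) ^ 2) * √(a ^ 2 + η ^ 2))⁻¹

theorem lintegral_kernel_eq_lintegral_mul_kernelMass (a : ℝ) {f : ℝ → ℂ} (hf : Measurable f) :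
    ∫⁻ p : ℝ × ℝ, ENNReal.ofReal
        (‖f (p.1 - p.2)‖ ^ 2 / (√(a ^ 2 + p.1 ^ 2) * √(a ^ 2 + p.2 ^ 2)))
      = ∫⁻ σ, ENNReal.ofReal (‖f σ‖ ^ 2) * kernelMass a σ := by
  have hmeas : Measurable fun p : ℝ × ℝ => ENNReal.ofReal
      (‖f (p.1 - p.2)‖ ^ 2 / (√(a ^ 2 + p.1 ^ 2) * √(a ^ 2 + p.2 ^ 2))) := by
    fun_prop
  rw [Measure.volume_eq_prod, ← (measurePreserving_add_prod volume volume).lintegral_comp hmeas]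
  simp only [add_sub_cancel_right, div_eq_mul_inv, ENNReal.ofReal_mul (sq_nonneg _)]
  rw [lintegral_prod _ (by fun_prop)]
  refine lintegral_congr fun σ => ?_
  dsimp only
  exact lintegral_const_mul _ (by fun_prop)

theorem ofReal_inv_mul_log_le_kernelMass {a : ℝ} (ha : 0 < a) (σ : ℝ) :
    ENNReal.ofReal ((2 * (a + |σ|))⁻¹ * log ((2 * a + |σ|) / a)) ≤ kernelMass a σ := by
  set s := |σ|
  rw [show 2 * a + s = a + (a + s) by ring,
    ← lintegral_Ioc_div_add ha (by positivity) (by positivity)]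
  refine (setLIntegral_mono' measurableSet_Ioc fun η hη => ?_).trans
    (setLIntegral_le_lintegral _ _)
  refine ENNReal.ofReal_le_ofReal ?_
  rw [div_eq_mul_inv, ← mul_inv]
  refine inv_anti₀ (by positivity) ?_
  calc √(a ^ 2 + (σ + η) ^ 2) * √(a ^ 2 + η ^ 2) ≤ (a + |σ + η|) * (a + |η|) :=
        mul_le_mul (sqrt_sq_add_sq_le_add_abs ha.le _) (sqrt_sq_add_sq_le_add_abs ha.le _)
          (sqrt_nonneg _) (by positivity)
    _ ≤ 2 * (a + s) * (a + η) := by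
        rw [abs_of_pos hη.1]
        refine mul_le_mul_of_nonneg_right ?_ (by linarith [hη.1])
        linarith [abs_add_le σ η, abs_of_pos hη.1, hη.2]

noncomputable def clippedKernel (a b t : ℝ) : ℝ := ((a + max t b) * (a + t))⁻¹

@[fun_prop]
theorem measurable_clippedKernel (a b : ℝ) : Measurable (clippedKernel a b) := by
  unfold clippedKernel
  fun_prop

theorem inv_mul_le_clippedKernel_add {a b x y : ℝ} (ha : 0 < a) (hx : 0 ≤ x) (hy : 0 ≤ y)
    (hb : 2 * b ≤ x + y) :
    ((a + x) * (a + y))⁻¹ ≤ clippedKernel a b x + clippedKernel a b y := by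
  wlog hxy : x ≤ y generalizing x y
  · rw [mul_comm (a + x), add_comm (clippedKernel a b x)]
    exact this hy hx (by linarith) (by linarith)
  have hmax : max x b ≤ y := max_le hxy (by linarith)
  calc ((a + x) * (a + y))⁻¹ ≤ clippedKernel a b x := by
        rw [clippedKernel, mul_comm (a + x)]
        exact inv_anti₀ (by positivity) (by gcongr)
    _ ≤ _ := le_add_of_nonneg_right (by unfold clippedKernel; positivity)

theorem lintegral_Ioi_clippedKernel {a b : ℝ} (ha : 0 < a) (hb : 0 ≤ b) :
    ∫⁻ t in Ioi 0, ENNReal.ofReal (clippedKernel a b t)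
      = ENNReal.ofReal ((1 + log ((a + b) / a)) / (a + b)) := by
  have hnear : ∫⁻ t in Ioc 0 b, ENNReal.ofReal (clippedKernel a b t)
      = ENNReal.ofReal ((a + b)⁻¹ * log ((a + b) / a)) := by
    rw [← lintegral_Ioc_div_add ha (by positivity) hb]
    refine setLIntegral_congr_fun measurableSet_Ioc fun t ht => ?_
    rw [clippedKernel, max_eq_right ht.2, mul_inv, div_eq_mul_inv]
  have hfar : ∫⁻ t in Ioi b, ENNReal.ofReal (clippedKernel a b t) = ENNReal.ofReal (a + b)⁻¹ := by
    rw [← lintegral_Ioi_inv_add_sq (by linarith)]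
    refine setLIntegral_congr_fun measurableSet_Ioi fun t ht => ?_
    rw [clippedKernel, max_eq_left (le_of_lt ht), sq]
  have hlog : 0 ≤ log ((a + b) / a) := log_nonneg ((le_div_iff₀ ha).mpr (by linarith))
  rw [← Ioc_union_Ioi_eq_Ioi hb, lintegral_union measurableSet_Ioi Ioc_disjoint_Ioi_same,
    hnear, hfar, ← ENNReal.ofReal_add (by positivity) (by positivity)]
  ring_nf

theorem kernelMass_le {a : ℝ} (ha : 0 < a) (σ : ℝ) :
    kernelMass a σ ≤ ENNReal.ofReal (16 * ((1 + log ((a + |σ| / 2) / a)) / (a + |σ| / 2))) := by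
  set b := |σ| / 2
  have hpt : ∀ η, ENNReal.ofReal (√(a ^ 2 + (σ + η) ^ 2) * √(a ^ 2 + η ^ 2))⁻¹
      ≤ ENNReal.ofReal 4 * (ENNReal.ofReal (clippedKernel a b |σ + η|)
        + ENNReal.ofReal (clippedKernel a b |η|)) := fun η => by
    rw [← ENNReal.ofReal_add (by unfold clippedKernel; positivity)
      (by unfold clippedKernel; positivity), ← ENNReal.ofReal_mul (by norm_num)]
    refine ENNReal.ofReal_le_ofReal ((inv_sqrt_mul_sqrt_le ha _ _).trans ?_)
    gcongr
    refine inv_mul_le_clippedKernel_add ha (abs_nonneg _) (abs_nonneg _) ?_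
    have := abs_sub (σ + η) η
    rw [add_sub_cancel_right] at this
    linarith [show 2 * b = |σ| by ring]
  have hshift := lintegral_add_left_eq_self (μ := volume)
    (fun t => ENNReal.ofReal (clippedKernel a b |t|)) σ
  calc kernelMass a σ ≤ ∫⁻ η, ENNReal.ofReal 4 * (ENNReal.ofReal (clippedKernel a b |σ + η|)
        + ENNReal.ofReal (clippedKernel a b |η|)) := lintegral_mono hpt
    _ = ENNReal.ofReal 4 * (2 * (2 * ∫⁻ t in Ioi 0, ENNReal.ofReal (clippedKernel a b t))) := by
        rw [lintegral_const_mul _ (by fun_prop), lintegral_add_left (by fun_prop), hshift,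
          lintegral_comp_abs (fun t => ENNReal.ofReal (clippedKernel a b t))]
        ring
    _ = _ := by
        rw [lintegral_Ioi_clippedKernel ha (by positivity), ENNReal.ofReal_mul (by norm_num)]
        norm_num
        ring

theorem ofReal_logWeight_div_eight_le_kernelMass {a : ℝ} (ha : 0 < a) (σ : ℝ) :
    ENNReal.ofReal (logWeight a σ / 8) ≤ kernelMass a σ := by
  refine (ENNReal.ofReal_le_ofReal ?_).trans (ofReal_inv_mul_log_le_kernelMass ha σ)
  rw [← logWeight_abs]
  exact logWeight_div_eight_le ha (abs_nonneg σ)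

theorem kernelMass_le_ofReal_logWeight {a : ℝ} (ha : 0 < a) (σ : ℝ) :
    kernelMass a σ ≤ ENNReal.ofReal (64 * logWeight a σ) := by
  refine (kernelMass_le ha σ).trans (ENNReal.ofReal_le_ofReal ?_)
  rw [← logWeight_abs]
  linarith [one_add_log_div_le_logWeight ha (abs_nonneg σ)]

/-- **Hilbert–Schmidt bound (kernel form).** There are absolute constants
`0 < c ≤ C` so that for all `κ > 0` and measurable `f : ℝ → ℂ`,
`c ∫ log(4+ξ²/κ²)(4κ²+ξ²)^{-1/2}|f(ξ)|² dξ
  ≤ ∬ |f(ξ-η)|² (κ²+ξ²)^{-1/2}(κ²+η²)^{-1/2} dξ dη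
  ≤ C ∫ log(4+ξ²/κ²)(4κ²+ξ²)^{-1/2}|f(ξ)|² dξ`,
and the latter is `≤ C κ^{-1} ∫ |f|²`.  (Integrals in the extended reals.) -/
theorem stmt_9 :
    ∃ c C : ℝ, 0 < c ∧ c ≤ C ∧
      ∀ κ : ℝ, 0 < κ → ∀ f : ℝ → ℂ, Measurable f →
        (ENNReal.ofReal c *
            (∫⁻ ξ : ℝ, ENNReal.ofReal
              (Real.log (4 + ξ ^ 2 / κ ^ 2) / Real.sqrt (4 * κ ^ 2 + ξ ^ 2) * ‖f ξ‖ ^ 2))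
          ≤ ∫⁻ p : ℝ × ℝ, ENNReal.ofReal
              (‖f (p.1 - p.2)‖ ^ 2
                / (Real.sqrt (κ ^ 2 + p.1 ^ 2) * Real.sqrt (κ ^ 2 + p.2 ^ 2)))) ∧
        ((∫⁻ p : ℝ × ℝ, ENNReal.ofReal
              (‖f (p.1 - p.2)‖ ^ 2
                / (Real.sqrt (κ ^ 2 + p.1 ^ 2) * Real.sqrt (κ ^ 2 + p.2 ^ 2))))
          ≤ ENNReal.ofReal C *
            (∫⁻ ξ : ℝ, ENNReal.ofReal
              (Real.log (4 + ξ ^ 2 / κ ^ 2) / Real.sqrt (4 * κ ^ 2 + ξ ^ 2) * ‖f ξ‖ ^ 2))) ∧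
        ((∫⁻ ξ : ℝ, ENNReal.ofReal
              (Real.log (4 + ξ ^ 2 / κ ^ 2) / Real.sqrt (4 * κ ^ 2 + ξ ^ 2) * ‖f ξ‖ ^ 2))
          ≤ ENNReal.ofReal (C / κ) * ∫⁻ ξ : ℝ, ENNReal.ofReal (‖f ξ‖ ^ 2)) := by
  refine ⟨1 / 8, 64, by norm_num, by norm_num, fun κ hκ f hf => ?_⟩
  have hsplit : ∀ ξ, ENNReal.ofReal
      (Real.log (4 + ξ ^ 2 / κ ^ 2) / Real.sqrt (4 * κ ^ 2 + ξ ^ 2) * ‖f ξ‖ ^ 2)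
        = ENNReal.ofReal (‖f ξ‖ ^ 2) * ENNReal.ofReal (logWeight κ ξ) := fun ξ => by
    rw [mul_comm, ENNReal.ofReal_mul (by positivity), logWeight]
  simp_rw [hsplit, lintegral_kernel_eq_lintegral_mul_kernelMass κ hf,
    ← lintegral_const_mul' _ _ ENNReal.ofReal_ne_top]
  refine ⟨lintegral_mono fun σ => ?_, lintegral_mono fun σ => ?_, lintegral_mono fun ξ => ?_⟩
  · rw [mul_left_comm, ← ENNReal.ofReal_mul (by norm_num), one_div_mul_eq_div]
    gcongr
    exact ofReal_logWeight_div_eight_le_kernelMass hκ σ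
  · rw [mul_left_comm, ← ENNReal.ofReal_mul (by norm_num)]
    gcongr
    exact kernelMass_le_ofReal_logWeight hκ σ
  · rw [mul_comm (ENNReal.ofReal (64 / κ))]
    gcongr
    linarith [logWeight_le hκ ξ, div_le_div_of_nonneg_right (by norm_num : (2 : ℝ) ≤ 64) hκ.le]
end

section
/- There exist absolute constants 0 < c ≤ C such that for every κ > 0 and every ζ ∈ ℝ one has c · log(4 + ζ²/κ²) / √(4κ² + ζ²) ≤ ∫_ℝ (κ² + (ζ − η)²)^{−1/2} (κ² + η²)^{−1/2} dη ≤ C · log(4 + ζ²/κ²) / √(4κ² + ζ²). -/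
/-!
Substituting `η = κ u` turns the integral into `κ⁻¹ ∫ ⟨z - u⟩⁻¹ ⟨u⟩⁻¹ du` with `z = ζ / κ` and
`⟨t⟩ = √(1 + t²)`, and with `m = max 1 |z|` both this integral and
`log (4 + z²) / √(4 + z²)` are comparable to `log (1 + m) / m`.

Lower bound: for `u ∈ [0, m]` we have `⟨z - u⟩ ≤ 3 m`, and `∫₀^m ⟨u⟩⁻¹ = arsinh m ≥ log (1 + m)`.
Upper bound: one of `|u|`, `|z - u|` is at least `|z| / 2`, so the smaller factor is at most
`2 / m` and the integrand is at most `(2 / m) (⟨u⟩⁻¹ + ⟨z - u⟩⁻¹)`, which integrates over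
`[-2m, 2m]` to `O (arsinh (3 m) / m)`; for `|u| ≥ 2 m` the integrand is at most
`4 / (4 m² + u²)`, whose integral over `ℝ` is `2π / m`.
-/

open MeasureTheory Set Real

noncomputable def invJapaneseBracket (t : ℝ) : ℝ := (√(1 + t ^ 2))⁻¹

lemma invJapaneseBracket_pos (t : ℝ) : 0 < invJapaneseBracket t :=
  inv_pos.2 (by positivity)

lemma invJapaneseBracket_sq (t : ℝ) : invJapaneseBracket t ^ 2 = (1 + t ^ 2)⁻¹ := by
  rw [invJapaneseBracket, inv_pow, sq_sqrt (by positivity)]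

@[fun_prop]
lemma continuous_invJapaneseBracket : Continuous invJapaneseBracket :=
  (continuous_const.add (continuous_pow 2)).sqrt.inv₀ fun t => (sqrt_pos.2 (by positivity : (0 : ℝ) < 1 + t ^ 2)).ne'

lemma integral_invJapaneseBracket (a b : ℝ) :
    ∫ u in a..b, invJapaneseBracket u = arsinh b - arsinh a :=
  intervalIntegral.integral_eq_sub_of_hasDerivAt (fun x _ => hasDerivAt_arsinh x)
    (continuous_invJapaneseBracket.intervalIntegrable _ _)

lemma invJapaneseBracket_le_two_div_max (z : ℝ) {t : ℝ} (h : |z| ≤ 2 * |t|) :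
    invJapaneseBracket t ≤ 2 / max 1 |z| := by
  have h1 : 1 ≤ √(1 + t ^ 2) := one_le_sqrt.2 (by nlinarith)
  have ht : |t| ≤ √(1 + t ^ 2) := abs_le_sqrt (by linarith)
  rw [invJapaneseBracket, le_div_iff₀ (by positivity), inv_mul_le_iff₀ (by positivity)]
  exact max_le (by linarith) (by linarith)

lemma inv_three_mul_le_invJapaneseBracket {t m : ℝ} (hm : 1 ≤ m) (ht : |t| ≤ 2 * m) :
    (3 * m)⁻¹ ≤ invJapaneseBracket t := by
  refine inv_anti₀ (by positivity) ((sqrt_le_left (by positivity)).2 ?_)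
  nlinarith [sq_abs t, abs_nonneg t]

lemma invJapaneseBracket_mul_le_of_le_abs {z u R : ℝ} (hR0 : 0 < R) (hR : 2 * |z| ≤ R)
    (hu : R ≤ |u|) :
    invJapaneseBracket (z - u) * invJapaneseBracket u ≤ 4 / (R ^ 2 + u ^ 2) := by
  have hzu : |u| / 2 ≤ √(1 + (z - u) ^ 2) := by
    have := abs_sub_abs_le_abs_sub u z
    rw [abs_sub_comm] at this
    exact (abs_le_sqrt (x := z - u) (by linarith)).trans' (by linarith)
  have hu' : |u| ≤ √(1 + u ^ 2) := abs_le_sqrt (by linarith)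
  rw [invJapaneseBracket, invJapaneseBracket, ← mul_inv, ← inv_div (R ^ 2 + u ^ 2),
    inv_le_inv₀ (by positivity) (by positivity)]
  calc (R ^ 2 + u ^ 2) / 4 ≤ |u| / 2 * |u| := by nlinarith [sq_abs u]
    _ ≤ _ := mul_le_mul hzu hu' (by positivity) (by positivity)

lemma integrable_invJapaneseBracket_mul (z : ℝ) :
    Integrable fun u => invJapaneseBracket (z - u) * invJapaneseBracket u := by
  have hmaj : Integrable fun u : ℝ => ((1 + (z - u) ^ 2)⁻¹ + (1 + u ^ 2)⁻¹) / 2 :=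
    (((integrable_comp_sub_left (fun x : ℝ => (1 + x ^ 2)⁻¹) z).2
      integrable_inv_one_add_sq).add integrable_inv_one_add_sq).div_const 2
  refine hmaj.mono' (by fun_prop) ?_
  refine .of_forall fun u => ?_
  rw [Real.norm_eq_abs, abs_of_pos (mul_pos (invJapaneseBracket_pos _) (invJapaneseBracket_pos u)),
    ← invJapaneseBracket_sq, ← invJapaneseBracket_sq]
  linarith [two_mul_le_add_sq (invJapaneseBracket (z - u)) (invJapaneseBracket u)]

lemma invJapaneseBracket_mul_le (z u : ℝ) :
    invJapaneseBracket (z - u) * invJapaneseBracket u ≤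
      2 / max 1 |z| * (invJapaneseBracket u + invJapaneseBracket (z - u)) := by
  have hu := invJapaneseBracket_pos u
  have hzu := invJapaneseBracket_pos (z - u)
  rcases le_total |z| (2 * |u|) with h | h
  · have := invJapaneseBracket_le_two_div_max z h
    nlinarith
  · have := invJapaneseBracket_le_two_div_max z (t := z - u) (by
      linarith [abs_sub_abs_le_abs_sub z u])
    nlinarith

lemma inv_sq_add_sq_eq (R u : ℝ) (hR : R ≠ 0) :
    (R ^ 2 + u ^ 2)⁻¹ = (R ^ 2)⁻¹ * (1 + (u / R) ^ 2)⁻¹ := by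
  field_simp

lemma integrable_inv_sq_add_sq {R : ℝ} (hR : R ≠ 0) :
    Integrable fun u : ℝ => (R ^ 2 + u ^ 2)⁻¹ := by
  simp_rw [inv_sq_add_sq_eq _ _ hR]
  exact (integrable_inv_one_add_sq.comp_div hR).const_mul _

lemma integral_univ_inv_sq_add_sq {R : ℝ} (hR : 0 < R) : ∫ u : ℝ, (R ^ 2 + u ^ 2)⁻¹ = π / R := by
  simp_rw [inv_sq_add_sq_eq _ _ hR.ne']
  rw [integral_const_mul, Measure.integral_comp_div (fun u => (1 + u ^ 2)⁻¹),
    integral_univ_inv_one_add_sq, abs_of_pos hR, smul_eq_mul]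
  field_simp

lemma log_one_add_le_arsinh {x : ℝ} (hx : 0 ≤ x) : log (1 + x) ≤ arsinh x :=
  log_le_log (by positivity) (by linarith [one_le_sqrt.2 (by nlinarith : 1 ≤ 1 + x ^ 2)])

lemma arsinh_le_log_one_add_two_mul {x : ℝ} (hx : 0 ≤ x) : arsinh x ≤ log (1 + 2 * x) := by
  refine log_le_log (by positivity) ?_
  have : √(1 + x ^ 2) ≤ 1 + x := (sqrt_le_left (by positivity)).2 (by nlinarith)
  linarith

lemma setIntegral_Ioc_invJapaneseBracket_mul_le (z : ℝ) {R : ℝ} (hR : 0 ≤ R) :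
    ∫ u in Ioc (-R) R, invJapaneseBracket (z - u) * invJapaneseBracket u ≤
      2 / max 1 |z| * (2 * arsinh R + (arsinh (z + R) - arsinh (z - R))) := by
  calc _ ≤ ∫ u in Ioc (-R) R, 2 / max 1 |z| * (invJapaneseBracket u + invJapaneseBracket (z - u)) :=
        setIntegral_mono_on (integrable_invJapaneseBracket_mul z).integrableOn
          ((by fun_prop : Continuous fun u =>
            invJapaneseBracket u + invJapaneseBracket (z - u)).integrableOn_Ioc.const_mul _) measurableSet_Ioc
          fun u _ => invJapaneseBracket_mul_le z u
    _ = _ := by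
      rw [← intervalIntegral.integral_of_le (by linarith), intervalIntegral.integral_const_mul,
        intervalIntegral.integral_add (continuous_invJapaneseBracket.intervalIntegrable _ _)
          ((by fun_prop : Continuous fun u => invJapaneseBracket (z - u)).intervalIntegrable _ _),
        intervalIntegral.integral_comp_sub_left invJapaneseBracket z,
        integral_invJapaneseBracket, integral_invJapaneseBracket, arsinh_neg]
      ring_nf

lemma setIntegral_compl_Ioc_invJapaneseBracket_mul_le {z R : ℝ} (hR0 : 0 < R)
    (hR : 2 * |z| ≤ R) :
    ∫ u in (Ioc (-R) R)ᶜ, invJapaneseBracket (z - u) * invJapaneseBracket u ≤ 4 * π / R := by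
  have hmaj : Integrable fun u : ℝ => 4 * (R ^ 2 + u ^ 2)⁻¹ :=
    (integrable_inv_sq_add_sq hR0.ne').const_mul 4
  calc _ ≤ ∫ u in (Ioc (-R) R)ᶜ, 4 * (R ^ 2 + u ^ 2)⁻¹ := by
        refine setIntegral_mono_on (integrable_invJapaneseBracket_mul z).integrableOn
          hmaj.integrableOn measurableSet_Ioc.compl fun u hu => ?_
        have hRu : R ≤ |u| := by
          simp only [mem_compl_iff, mem_Ioc, not_and_or, not_lt, not_le] at hu
          rcases hu with hu | hu
          · exact le_abs.2 (Or.inr (by linarith))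
          · exact le_abs.2 (Or.inl hu.le)
        simpa [div_eq_mul_inv] using invJapaneseBracket_mul_le_of_le_abs hR0 hR hRu
    _ ≤ ∫ u, 4 * (R ^ 2 + u ^ 2)⁻¹ :=
        setIntegral_le_integral hmaj (.of_forall fun u => by positivity)
    _ = 4 * π / R := by rw [integral_const_mul, integral_univ_inv_sq_add_sq hR0, mul_div_assoc]

lemma integral_invJapaneseBracket_mul_le (z : ℝ) :
    ∫ u, invJapaneseBracket (z - u) * invJapaneseBracket u ≤
      40 * (log (1 + max 1 |z|) / max 1 |z|) := by
  set m := max 1 |z|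
  have hm : 1 ≤ m := le_max_left _ _
  have hzm : |z| ≤ m := le_max_right _ _
  have hz := abs_le.1 hzm
  have hbulk := setIntegral_Ioc_invJapaneseBracket_mul_le z (R := 2 * m) (by positivity)
  have htail := setIntegral_compl_Ioc_invJapaneseBracket_mul_le (z := z) (R := 2 * m)
    (by positivity) (by linarith)
  have harsinh : 2 * arsinh (2 * m) + (arsinh (z + 2 * m) - arsinh (z - 2 * m)) ≤
      4 * arsinh (3 * m) := by
    have h1 : arsinh (2 * m) ≤ arsinh (3 * m) := arsinh_le_arsinh.2 (by linarith)
    have h2 : arsinh (z + 2 * m) ≤ arsinh (3 * m) := arsinh_le_arsinh.2 (by linarith)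
    have h3 : arsinh (-(3 * m)) ≤ arsinh (z - 2 * m) := arsinh_le_arsinh.2 (by linarith)
    rw [arsinh_neg] at h3
    linarith
  have harsinh3 : arsinh (3 * m) ≤ 3 * log (1 + m) := by
    refine (arsinh_le_log_one_add_two_mul (by positivity)).trans ?_
    rw [← log_rpow (by positivity)]
    exact log_le_log (by positivity) (by
      norm_cast; nlinarith [mul_le_mul hm hm zero_le_one (by linarith)])
  have hlog2 : 1 / 2 ≤ log (1 + m) := by
    have := log_two_gt_d9
    linarith [log_le_log (by norm_num) (by linarith : (2 : ℝ) ≤ 1 + m)]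
  rw [← integral_add_compl measurableSet_Ioc (integrable_invJapaneseBracket_mul z)]
  calc _ ≤ 2 / m * (4 * (3 * log (1 + m))) + 4 * 4 / (2 * m) := by
        gcongr
        · exact hbulk.trans (by gcongr; linarith)
        · exact htail.trans (by gcongr; exact pi_le_four)
    _ = (24 * log (1 + m) + 8) / m := by field_simp; ring
    _ ≤ 40 * (log (1 + m) / m) := by
        rw [← mul_div_assoc]
        gcongr
        linarith

lemma log_div_le_three_mul_integral_invJapaneseBracket_mul (z : ℝ) :
    log (1 + max 1 |z|) / max 1 |z| ≤
      3 * ∫ u, invJapaneseBracket (z - u) * invJapaneseBracket u := by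
  set m := max 1 |z|
  have hm : 1 ≤ m := le_max_left _ _
  have hzm : |z| ≤ m := le_max_right _ _
  have hint := integrable_invJapaneseBracket_mul z
  rw [← div_le_iff₀' three_pos, div_div, mul_comm m]
  calc _ ≤ (3 * m)⁻¹ * arsinh m := by
        rw [div_eq_inv_mul]
        gcongr
        exact log_one_add_le_arsinh (by positivity)
    _ = ∫ u in Ioc 0 m, (3 * m)⁻¹ * invJapaneseBracket u := by
        rw [← intervalIntegral.integral_of_le (by positivity), intervalIntegral.integral_const_mul,
          integral_invJapaneseBracket, arsinh_zero, sub_zero]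
    _ ≤ ∫ u in Ioc 0 m, invJapaneseBracket (z - u) * invJapaneseBracket u := by
        refine setIntegral_mono_on (continuous_invJapaneseBracket.integrableOn_Ioc.const_mul _)
          hint.integrableOn measurableSet_Ioc fun u hu => ?_
        have hzu : |z - u| ≤ 2 * m := by
          rw [abs_le] at hzm ⊢
          constructor <;> linarith [hu.1, hu.2]
        gcongr
        · exact (invJapaneseBracket_pos u).le
        · exact inv_three_mul_le_invJapaneseBracket hm hzu
    _ ≤ _ := setIntegral_le_integral hint
        (.of_forall fun u => (mul_pos (invJapaneseBracket_pos _) (invJapaneseBracket_pos u)).le)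

lemma log_four_add_sq_div_sqrt_comparable (z : ℝ) :
    log (1 + max 1 |z|) / max 1 |z| ≤ 3 * (log (4 + z ^ 2) / √(4 + z ^ 2)) ∧
      log (4 + z ^ 2) / √(4 + z ^ 2) ≤ 4 * (log (1 + max 1 |z|) / max 1 |z|) := by
  set m := max 1 |z|
  have hm : 1 ≤ m := le_max_left _ _
  have hzm : |z| ≤ m := le_max_right _ _
  have hz2 : z ^ 2 ≤ m ^ 2 := sq_le_sq' (abs_le.1 hzm).1 (abs_le.1 hzm).2
  have hmS : m ≤ √(4 + z ^ 2) :=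
    max_le (one_le_sqrt.2 (by nlinarith)) (abs_le_sqrt (by linarith))
  have hS3m : √(4 + z ^ 2) ≤ 3 * m := (sqrt_le_left (by positivity)).2 (by nlinarith)
  have hlogL : log (1 + m) ≤ log (4 + z ^ 2) :=
    log_le_log (by positivity) (by
      linarith [max_le (by nlinarith : 1 ≤ 3 + z ^ 2) (by nlinarith [sq_abs z] : |z| ≤ 3 + z ^ 2)])
  have hLlog : log (4 + z ^ 2) ≤ 4 * log (1 + m) := by
    rw [← log_rpow (by positivity)]
    exact log_le_log (by positivity) (by
      norm_cast; nlinarith [mul_le_mul hm hm zero_le_one (by linarith)])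
  have hlog0 : 0 ≤ log (1 + m) := log_nonneg (by linarith)
  constructor
  · calc _ ≤ log (4 + z ^ 2) / (√(4 + z ^ 2) / 3) := by
          have := hlog0.trans hlogL
          gcongr
          linarith
      _ = _ := by ring
  · calc _ ≤ 4 * log (1 + m) / m := by gcongr
      _ = _ := by ring

lemma inv_sqrt_sq_add_sq {κ : ℝ} (hκ : 0 < κ) (t : ℝ) :
    (√(κ ^ 2 + t ^ 2))⁻¹ = κ⁻¹ * invJapaneseBracket (t / κ) := by
  rw [invJapaneseBracket, ← mul_inv, show κ ^ 2 + t ^ 2 = κ ^ 2 * (1 + (t / κ) ^ 2) by field_simp,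
    sqrt_mul (by positivity), sqrt_sq hκ.le]

lemma integral_inv_sqrt_mul_sqrt {κ : ℝ} (hκ : 0 < κ) (ζ : ℝ) :
    ∫ η : ℝ, (√(κ ^ 2 + (ζ - η) ^ 2) * √(κ ^ 2 + η ^ 2))⁻¹ =
      κ⁻¹ * ∫ u, invJapaneseBracket (ζ / κ - u) * invJapaneseBracket u := by
  set g := fun u => invJapaneseBracket (ζ / κ - u) * invJapaneseBracket u
  have hg : ∀ η, (√(κ ^ 2 + (ζ - η) ^ 2) * √(κ ^ 2 + η ^ 2))⁻¹ = κ⁻¹ * (κ⁻¹ * g (η / κ)) := by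
    intro η
    rw [mul_inv, inv_sqrt_sq_add_sq hκ, inv_sqrt_sq_add_sq hκ, sub_div]
    ring
  simp_rw [hg]
  rw [integral_const_mul, integral_const_mul, Measure.integral_comp_div g κ, abs_of_pos hκ,
    smul_eq_mul, inv_mul_cancel_left₀ hκ.ne']

lemma log_div_sqrt_rescale {κ : ℝ} (hκ : 0 < κ) (ζ : ℝ) :
    log (4 + ζ ^ 2 / κ ^ 2) / √(4 * κ ^ 2 + ζ ^ 2) =
      κ⁻¹ * (log (4 + (ζ / κ) ^ 2) / √(4 + (ζ / κ) ^ 2)) := by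
  rw [show 4 * κ ^ 2 + ζ ^ 2 = κ ^ 2 * (4 + (ζ / κ) ^ 2) by field_simp, sqrt_mul (by positivity),
    sqrt_sq hκ.le, div_pow]
  field_simp

/-- **Kernel computation for the Hilbert–Schmidt bound.** There are absolute
constants `0 < c ≤ C` so that for all `κ > 0` and `ζ ∈ ℝ`,
`c log(4+ζ²/κ²)/√(4κ²+ζ²) ≤ ∫ (κ²+(ζ-η)²)^{-1/2}(κ²+η²)^{-1/2} dη
  ≤ C log(4+ζ²/κ²)/√(4κ²+ζ²)`. -/
theorem stmt_10 :
    ∃ c C : ℝ, 0 < c ∧ c ≤ C ∧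
      ∀ κ : ℝ, 0 < κ → ∀ ζ : ℝ,
        (c * (Real.log (4 + ζ ^ 2 / κ ^ 2) / Real.sqrt (4 * κ ^ 2 + ζ ^ 2))
            ≤ ∫ η : ℝ, (Real.sqrt (κ ^ 2 + (ζ - η) ^ 2) * Real.sqrt (κ ^ 2 + η ^ 2))⁻¹) ∧
        ((∫ η : ℝ, (Real.sqrt (κ ^ 2 + (ζ - η) ^ 2) * Real.sqrt (κ ^ 2 + η ^ 2))⁻¹)
            ≤ C * (Real.log (4 + ζ ^ 2 / κ ^ 2) / Real.sqrt (4 * κ ^ 2 + ζ ^ 2))) := by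
  refine ⟨1 / 12, 120, by norm_num, by norm_num, fun κ hκ ζ => ?_⟩
  rw [integral_inv_sqrt_mul_sqrt hκ, log_div_sqrt_rescale hκ, mul_left_comm, mul_left_comm 120]
  obtain ⟨hscale_le, hle_scale⟩ := log_four_add_sq_div_sqrt_comparable (ζ / κ)
  have hscale_le_integral := log_div_le_three_mul_integral_invJapaneseBracket_mul (ζ / κ)
  have hintegral_le_scale := integral_invJapaneseBracket_mul_le (ζ / κ)
  constructor
  · gcongr
    linarith
  · gcongr
    linarith
end

section
/- Fix ν ∈ ℝ and define the gauge map G_ν on L²(ℝ; ℂ) by G_ν(q)(x) := q(x) · exp( i ν ∫_{−∞}^{x} |q(y)|² dy ). Then: (i) G_ν is well defined and |G_ν(q)(x)| = |q(x)| for almost every x, so G_ν maps L²(ℝ) into L²(ℝ) preserving the L² norm; (ii) G_{−ν} ∘ G_ν is the identity on L²(ℝ), so G_ν is a bijection of L²(ℝ) with inverse G_{−ν}; and (iii) G_ν is continuous from L²(ℝ) to L²(ℝ). -/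
/-! Since `|G_ν q| = |q|` pointwise, `G_ν` does not change the phase `Φ_q`, so `G_{-ν}` undoes it.
For continuity, write `G_ν q' - G_ν q = (q' - q) e^{iνΦ_{q'}} + q (e^{iνΦ_{q'}} - e^{iνΦ_q})`:
the first term has the norm of `q' - q`, and in the second the phases differ uniformly by at most
`|ν| ‖|q'|² - |q|²‖₁ ≤ |ν| ‖q' - q‖₂ (‖q' - q‖₂ + 2‖q‖₂)` by Cauchy–Schwarz, so `G_ν` is locally
Lipschitz on `L²`. -/

open MeasureTheory

/-- The antiderivative of `|q|²`: `Φ(x) = ∫_{-∞}^x |q(y)|² dy`. -/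
noncomputable def gaugePhase (q : ℝ → ℂ) (x : ℝ) : ℝ :=
  ∫ y in Set.Iic x, ‖q y‖ ^ 2

/-- The gauge map `G_ν(q)(x) = q(x) exp(iν ∫_{-∞}^x |q(y)|² dy)`. -/
noncomputable def gaugeMap (ν : ℝ) (q : ℝ → ℂ) : ℝ → ℂ := fun x =>
  q x * Complex.exp (Complex.I * (ν : ℂ) * (gaugePhase q x : ℂ))

open Complex
open scoped ENNReal

lemma abs_sq_sub_sq_le {a b d : ℝ} (ha : 0 ≤ a) (hb : 0 ≤ b) (h : |a - b| ≤ d) :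
    |a ^ 2 - b ^ 2| ≤ d * d + 2 * (d * b) := by
  have hd : 0 ≤ d := (abs_nonneg _).trans h
  have hsum : a + b ≤ d + 2 * b := by linarith [(abs_le.1 h).2]
  rw [show a ^ 2 - b ^ 2 = (a - b) * (a + b) by ring, abs_mul, abs_of_nonneg (add_nonneg ha hb)]
  calc |a - b| * (a + b) ≤ d * (d + 2 * b) := mul_le_mul h hsum (by positivity) hd
    _ = d * d + 2 * (d * b) := by ring

lemma norm_exp_I_mul_ofReal_mul_ofReal (ν a : ℝ) : ‖exp (I * ν * a)‖ = 1 := by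
  rw [mul_assoc, ← ofReal_mul, norm_exp_I_mul_ofReal]

lemma norm_exp_I_mul_ofReal_mul_ofReal_sub_le (ν a b : ℝ) :
    ‖exp (I * ν * a) - exp (I * ν * b)‖ ≤ |ν| * |a - b| := by
  have hfactor :
      exp (I * ν * a) - exp (I * ν * b) = exp (I * ν * b) * (exp (I * ↑(ν * (a - b))) - 1) := by
    rw [mul_sub, ← exp_add]
    push_cast
    ring_nf
  rw [hfactor, norm_mul, norm_exp_I_mul_ofReal_mul_ofReal, one_mul, ← abs_mul]
  exact Real.norm_exp_I_mul_ofReal_sub_one_le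

section L2

variable {α : Type*} [MeasurableSpace α] {μ : Measure α} {E : Type*} [NormedAddCommGroup E]
  {f g : α → E}

lemma MeasureTheory.MemLp.integrable_norm_sq (hf : MemLp f 2 μ) :
    Integrable (fun x => ‖f x‖ ^ 2) μ :=
  hf.integrable_norm_pow two_ne_zero

lemma integral_norm_mul_norm_le (hf : MemLp f 2 μ) (hg : MemLp g 2 μ) :
    ∫ x, ‖f x‖ * ‖g x‖ ∂μ ≤ (eLpNorm f 2 μ).toReal * (eLpNorm g 2 μ).toReal := by
  have h := integral_mul_norm_le_Lp_mul_Lq Real.HolderConjugate.two_two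
    (by simpa using hf) (by simpa using hg)
  rw [hf.eLpNorm_eq_integral_rpow_norm two_ne_zero ENNReal.ofNat_ne_top,
    hg.eLpNorm_eq_integral_rpow_norm two_ne_zero ENNReal.ofNat_ne_top]
  simp only [ENNReal.toReal_ofNat, one_div] at h ⊢
  rwa [ENNReal.toReal_ofReal (by positivity), ENNReal.toReal_ofReal (by positivity)]

lemma integral_abs_norm_sq_sub_norm_sq_le (hf : MemLp f 2 μ) (hg : MemLp g 2 μ) :
    ∫ x, |‖f x‖ ^ 2 - ‖g x‖ ^ 2| ∂μ ≤ (eLpNorm (f - g) 2 μ).toReal *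
      ((eLpNorm (f - g) 2 μ).toReal + 2 * (eLpNorm g 2 μ).toReal) := by
  have hfg := hf.sub hg
  have hprod : ∀ {h k : α → E}, MemLp h 2 μ → MemLp k 2 μ →
      Integrable (fun x => ‖h x‖ * ‖k x‖) μ :=
    fun hh hk => hh.norm.integrable_mul hk.norm
  calc ∫ x, |‖f x‖ ^ 2 - ‖g x‖ ^ 2| ∂μ
      ≤ ∫ x, ‖(f - g) x‖ * ‖(f - g) x‖ + 2 * (‖(f - g) x‖ * ‖g x‖) ∂μ :=
        integral_mono (hf.integrable_norm_sq.sub hg.integrable_norm_sq).abs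
          ((hprod hfg hfg).add ((hprod hfg hg).const_mul 2)) fun x =>
            abs_sq_sub_sq_le (norm_nonneg _) (norm_nonneg _) (abs_norm_sub_norm_le _ _)
    _ = ∫ x, ‖(f - g) x‖ * ‖(f - g) x‖ ∂μ + 2 * ∫ x, ‖(f - g) x‖ * ‖g x‖ ∂μ := by
        rw [integral_add (hprod hfg hfg) ((hprod hfg hg).const_mul 2), integral_const_mul]
    _ ≤ (eLpNorm (f - g) 2 μ).toReal * (eLpNorm (f - g) 2 μ).toReal +
          2 * ((eLpNorm (f - g) 2 μ).toReal * (eLpNorm g 2 μ).toReal) := by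
        gcongr
        exacts [integral_norm_mul_norm_le hfg hfg, integral_norm_mul_norm_le hfg hg]
    _ = _ := by ring

end L2

lemma monotone_gaugePhase {q : ℝ → ℂ} (hq : Integrable (fun y => ‖q y‖ ^ 2)) :
    Monotone (gaugePhase q) := fun _ _ hab =>
  setIntegral_mono_set hq.integrableOn (ae_of_all _ fun _ => by positivity)
    (Set.Iic_subset_Iic.2 hab).eventuallyLE

lemma abs_gaugePhase_sub_le {f g : ℝ → ℂ} (hf : Integrable (fun y => ‖f y‖ ^ 2))
    (hg : Integrable (fun y => ‖g y‖ ^ 2)) (x : ℝ) :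
    |gaugePhase f x - gaugePhase g x| ≤ ∫ y, |‖f y‖ ^ 2 - ‖g y‖ ^ 2| := by
  rw [gaugePhase, gaugePhase, ← integral_sub hf.integrableOn hg.integrableOn]
  calc |∫ y in Set.Iic x, ‖f y‖ ^ 2 - ‖g y‖ ^ 2|
      ≤ ∫ y in Set.Iic x, |‖f y‖ ^ 2 - ‖g y‖ ^ 2| := abs_integral_le_integral_abs
    _ ≤ ∫ y, |‖f y‖ ^ 2 - ‖g y‖ ^ 2| :=
        setIntegral_le_integral (hf.sub hg).abs (ae_of_all _ fun _ => abs_nonneg _)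

lemma measurable_exp_gaugePhase {q : ℝ → ℂ} (hq : Integrable (fun y => ‖q y‖ ^ 2)) (ν : ℝ) :
    Measurable fun x => exp (I * ν * gaugePhase q x) :=
  (by fun_prop : Continuous fun r : ℝ => exp (I * ν * r)).measurable.comp
    (monotone_gaugePhase hq).measurable

lemma norm_gaugeMap_apply (ν : ℝ) (q : ℝ → ℂ) (x : ℝ) : ‖gaugeMap ν q x‖ = ‖q x‖ := by
  rw [gaugeMap, norm_mul, norm_exp_I_mul_ofReal_mul_ofReal, mul_one]

lemma eLpNorm_gaugeMap (ν : ℝ) (q : ℝ → ℂ) (p : ℝ≥0∞) (μ : Measure ℝ) :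
    eLpNorm (gaugeMap ν q) p μ = eLpNorm q p μ :=
  eLpNorm_congr_norm_ae (ae_of_all _ (norm_gaugeMap_apply ν q))

lemma MeasureTheory.MemLp.gaugeMap {q : ℝ → ℂ} (hq : MemLp q 2) (ν : ℝ) :
    MemLp (gaugeMap ν q) 2 :=
  ⟨hq.1.mul (measurable_exp_gaugePhase hq.integrable_norm_sq ν).aestronglyMeasurable,
    (eLpNorm_gaugeMap ν q 2 volume).symm ▸ hq.2⟩

lemma gaugePhase_gaugeMap (ν : ℝ) (q : ℝ → ℂ) : gaugePhase (gaugeMap ν q) = gaugePhase q := by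
  funext x
  simp only [gaugePhase, norm_gaugeMap_apply]

lemma gaugeMap_neg_gaugeMap (ν : ℝ) (q : ℝ → ℂ) : gaugeMap (-ν) (gaugeMap ν q) = q := by
  funext x
  have hcancel : I * ν * gaugePhase q x + I * ↑(-ν) * gaugePhase q x = 0 := by push_cast; ring
  rw [gaugeMap, gaugePhase_gaugeMap, gaugeMap, mul_assoc, ← exp_add, hcancel, exp_zero, mul_one]

lemma eLpNorm_gaugeMap_sub_le (ν : ℝ) {f g : ℝ → ℂ} (hf : MemLp f 2) (hg : MemLp g 2) :
    eLpNorm (gaugeMap ν f - gaugeMap ν g) 2 ≤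
      eLpNorm (f - g) 2 + ENNReal.ofReal (|ν| * ∫ y, |‖f y‖ ^ 2 - ‖g y‖ ^ 2|) * eLpNorm g 2 := by
  set Ef : ℝ → ℂ := fun x => exp (I * ν * gaugePhase f x)
  set Eg : ℝ → ℂ := fun x => exp (I * ν * gaugePhase g x)
  have hEf := measurable_exp_gaugePhase hf.integrable_norm_sq ν
  have hEg := measurable_exp_gaugePhase hg.integrable_norm_sq ν
  have hsplit : gaugeMap ν f - gaugeMap ν g = (f - g) * Ef + g * (Ef - Eg) := by
    funext x
    simp only [gaugeMap, Pi.add_apply, Pi.sub_apply, Pi.mul_apply, Ef, Eg]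
    ring
  have hfirst : eLpNorm ((f - g) * Ef) 2 = eLpNorm (f - g) 2 :=
    eLpNorm_congr_norm_ae (ae_of_all _ fun x => by
      simp only [Pi.mul_apply, norm_mul, Ef, norm_exp_I_mul_ofReal_mul_ofReal, mul_one])
  have hsecond : eLpNorm (g * (Ef - Eg)) 2 ≤
      ENNReal.ofReal (|ν| * ∫ y, |‖f y‖ ^ 2 - ‖g y‖ ^ 2|) * eLpNorm g 2 :=
    eLpNorm_le_mul_eLpNorm_of_ae_le_mul (ae_of_all _ fun x => by
      rw [Pi.mul_apply, norm_mul, mul_comm]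
      gcongr
      exact (norm_exp_I_mul_ofReal_mul_ofReal_sub_le ν _ _).trans
        (by gcongr; exact abs_gaugePhase_sub_le hf.integrable_norm_sq hg.integrable_norm_sq x)) _
  rw [hsplit, ← hfirst]
  exact (eLpNorm_add_le ((hf.sub hg).1.mul hEf.aestronglyMeasurable)
    (hg.1.mul (hEf.sub hEg).aestronglyMeasurable) one_le_two).trans (add_le_add le_rfl hsecond)

lemma toReal_eLpNorm_gaugeMap_sub_le (ν : ℝ) {f g : ℝ → ℂ} (hf : MemLp f 2) (hg : MemLp g 2) :
    (eLpNorm (gaugeMap ν f - gaugeMap ν g) 2).toReal ≤ (eLpNorm (f - g) 2).toReal *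
      (1 + |ν| * ((eLpNorm (f - g) 2).toReal + 2 * (eLpNorm g 2).toReal) *
        (eLpNorm g 2).toReal) := by
  have hsecond_ne_top : ENNReal.ofReal (|ν| * ∫ y, |‖f y‖ ^ 2 - ‖g y‖ ^ 2|) * eLpNorm g 2 ≠ ∞ :=
    ENNReal.mul_ne_top ENNReal.ofReal_ne_top hg.eLpNorm_ne_top
  have hreal := ENNReal.toReal_mono (ENNReal.add_ne_top.2 ⟨(hf.sub hg).eLpNorm_ne_top,
    hsecond_ne_top⟩) (eLpNorm_gaugeMap_sub_le ν hf hg)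
  rw [ENNReal.toReal_add (hf.sub hg).eLpNorm_ne_top hsecond_ne_top, ENNReal.toReal_mul,
    ENNReal.toReal_ofReal (by positivity)] at hreal
  grw [hreal, integral_abs_norm_sq_sub_norm_sq_le hf hg]
  exact le_of_eq (by ring)

/-- **The gauge map is an `L²`-norm preserving homeomorphism of `L²(ℝ)`.**
(i) `|G_ν q| = |q|` pointwise, `G_ν` maps `L²` to `L²` preserving the `L²` norm;
(ii) `G_{-ν} ∘ G_ν = id`; (iii) `G_ν` is continuous on `L²`. -/
theorem stmt_14 (ν : ℝ) :
    (∀ q : ℝ → ℂ, MemLp q 2 (volume : Measure ℝ) →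
      (∀ x : ℝ, ‖gaugeMap ν q x‖ = ‖q x‖) ∧
      MemLp (gaugeMap ν q) 2 (volume : Measure ℝ) ∧
      eLpNorm (gaugeMap ν q) 2 (volume : Measure ℝ) = eLpNorm q 2 (volume : Measure ℝ)) ∧
    (∀ q : ℝ → ℂ, gaugeMap (-ν) (gaugeMap ν q) = q) ∧
    (∀ q : ℝ → ℂ, MemLp q 2 (volume : Measure ℝ) → ∀ ε : ℝ, 0 < ε →
      ∃ δ : ℝ, 0 < δ ∧ ∀ q' : ℝ → ℂ, MemLp q' 2 (volume : Measure ℝ) →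
        eLpNorm (fun x => q' x - q x) 2 (volume : Measure ℝ) < ENNReal.ofReal δ →
        eLpNorm (fun x => gaugeMap ν q' x - gaugeMap ν q x) 2 (volume : Measure ℝ)
          < ENNReal.ofReal ε) := by
  refine ⟨fun q hq => ⟨norm_gaugeMap_apply ν q, hq.gaugeMap ν, eLpNorm_gaugeMap ν q 2 volume⟩,
    gaugeMap_neg_gaugeMap ν, fun q hq ε hε => ?_⟩
  set K := (eLpNorm q 2).toReal
  set L := 1 + |ν| * (1 + 2 * K) * K
  have hL : 0 < L := by positivity
  refine ⟨min 1 (ε / L), by positivity, fun q' hq' hclose => ?_⟩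
  set U := (eLpNorm (q' - q) 2).toReal
  have hU : U < min 1 (ε / L) := ENNReal.toReal_lt_of_lt_ofReal hclose
  rw [← Pi.sub_def,
    ENNReal.lt_ofReal_iff_toReal_lt ((hq'.gaugeMap ν).sub (hq.gaugeMap ν)).eLpNorm_ne_top]
  refine (toReal_eLpNorm_gaugeMap_sub_le ν hq' hq).trans_lt ?_
  calc U * (1 + |ν| * (U + 2 * K) * K) ≤ U * (1 + |ν| * (1 + 2 * K) * K) := by
        gcongr
        exact hU.le.trans (min_le_left _ _)
    _ < ε := (lt_div_iff₀ hL).1 (hU.trans_le (min_le_right _ _))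
end
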